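/- arXiv:1505.03679 — 7 statements merged into one kernel-verified Lean document; each statement's English description precedes it below -/
import Mathlib

section
/- Let a, b, c be positive integers with a ≤ b ≤ c. If every nonnegative integer n can be written as x(ax+1) + y(by+1) + z(cz+1) with x, y, z integers, then (a,b,c) is one of the 17 triples: (1,1,2), (1,2,2), (1,2,3), (1,2,4), (1,2,5), (2,2,2), (2,2,3), (2,2,4), (2,2,5), (2,2,6), (2,3,3), (2,3,4), (2,3,5), (2,3,7), (2,3,8), (2,3,9), (2,3,10). -/
lemma term_nonneg (t x : ℤ) (ht : 1 ≤ t) : 0 ≤ x*(t*x+1) := by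
  rcases le_or_gt 0 x with h|h
  · have : 0 ≤ t*x+1 := by nlinarith
    exact mul_nonneg h this
  · have hx : x ≤ -1 := by omega
    nlinarith [mul_nonneg (by nlinarith : (0:ℤ) ≤ -x) (by nlinarith : (0:ℤ) ≤ -(x+1))]

lemma term_lb (t x : ℤ) (ht : 1 ≤ t) (hx : x ≠ 0) : t - 1 ≤ x*(t*x+1) := by
  rcases lt_or_lt_iff_ne.mpr hx with h|h
  · have hx1 : x ≤ -1 := by omega
    nlinarith [mul_nonneg (by nlinarith : (0:ℤ) ≤ -(x+1)) (by nlinarith : (0:ℤ) ≤ -(t*(x-1)+1))]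
  · have hx1 : 1 ≤ x := h
    nlinarith [mul_le_mul hx1 (by nlinarith : t+1 ≤ t*x+1) (by nlinarith) (by omega : (0:ℤ) ≤ x)]

/-- zero-or-lower-bound dichotomy -/
lemma term_zlb (t x : ℤ) (ht : 1 ≤ t) : x*(t*x+1) = 0 ∨ t - 1 ≤ x*(t*x+1) := by
  rcases eq_or_ne x 0 with rfl|hx
  · left; ring
  · right; exact term_lb t x ht hx

set_option maxHeartbeats 2000000 in
theorem stmt_2 (a b c : ℤ) (ha : 0 < a) (hab : a ≤ b) (hbc : b ≤ c)
    (h : ∀ n : ℕ, ∃ x y z : ℤ, (n : ℤ) = x*(a*x+1) + y*(b*y+1) + z*(c*z+1)) :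
    (a,b,c) ∈ ({(1,1,2), (1,2,2), (1,2,3), (1,2,4), (1,2,5), (2,2,2), (2,2,3),
      (2,2,4), (2,2,5), (2,2,6), (2,3,3), (2,3,4), (2,3,5), (2,3,7), (2,3,8),
      (2,3,9), (2,3,10)} : Set (ℤ × ℤ × ℤ)) := by
  have hb : (1:ℤ) ≤ b := by omega
  have hc : (1:ℤ) ≤ c := by omega
  -- a ≤ 2
  have ha2 : a ≤ 2 := by
    by_contra hA
    obtain ⟨x, y, z, e⟩ := h 1
    have h1 := term_zlb a x (by omega)
    have h2 := term_zlb b y (by omega)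
    have h3 := term_zlb c z (by omega)
    have n1 := term_nonneg a x (by omega)
    have n2 := term_nonneg b y (by omega)
    have n3 := term_nonneg c z (by omega)
    push_cast at e
    omega
  interval_cases a
  · -- a = 1
    have hb2 : b ≤ 2 := by
      by_contra hB
      obtain ⟨x, y, z, e⟩ := h 1
      have h2 := term_zlb b y (by omega)
      have h3 := term_zlb c z (by omega)
      have n1 := term_nonneg 1 x (by omega)
      have n2 := term_nonneg b y (by omega)
      have n3 := term_nonneg c z (by omega)
      have hev : x*(1*x+1) = x*(x+1) := by ring
      have he : Even (x*(x+1)) := Int.even_mul_succ_self x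
      rw [Int.even_iff] at he
      push_cast at e
      omega
    interval_cases b
    · -- a = 1, b = 1 : show c = 2
      have hcc : c = 2 := by
        rcases eq_or_ne c 2 with h2|h2
        · exact h2
        exfalso
        obtain ⟨x, y, z, e⟩ := h 1
        have n1 := term_nonneg 1 x (by omega)
        have n2 := term_nonneg 1 y (by omega)
        have n3 := term_nonneg c z (by omega)
        have e1 : x*(1*x+1) = x*(x+1) := by ring
        have e2 : y*(1*y+1) = y*(y+1) := by ring
        have he1 := Int.even_mul_succ_self x
        have he2 := Int.even_mul_succ_self y
        rw [Int.even_iff] at he1 he2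
        push_cast at e
        rcases eq_or_lt_of_le hc with h1|h1
        · -- c = 1
          have e3 : z*(c*z+1) = z*(z+1) := by rw [← h1]; ring
          have he3 := Int.even_mul_succ_self z
          rw [Int.even_iff] at he3
          omega
        · -- c ≥ 3 (since c ≠ 2)
          have h3 := term_zlb c z (by omega)
          omega
      subst hcc
      simp only [Set.mem_insert_iff, Set.mem_singleton_iff, Prod.mk.injEq]
      norm_num
    · -- a = 1, b = 2 : show c ≤ 5
      have hc5 : c ≤ 5 := by
        by_contra hC
        obtain ⟨x, y, z, e⟩ := h 4
        have n1 := term_nonneg 1 x (by omega)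
        have n2 := term_nonneg 2 y (by omega)
        have n3 := term_nonneg c z (by omega)
        have h3 := term_zlb c z (by omega)
        push_cast at e
        have hz : z*(c*z+1) = 0 := by omega
        have hx1 : -3 ≤ x ∧ x ≤ 2 := by constructor <;> nlinarith [sq_nonneg (x+3), sq_nonneg (x-3)]
        have hy1 : -2 ≤ y ∧ y ≤ 2 := by constructor <;> nlinarith [sq_nonneg (y+2), sq_nonneg (y-2)]
        obtain ⟨hx1, hx2⟩ := hx1
        obtain ⟨hy1, hy2⟩ := hy1
        interval_cases x <;> interval_cases y <;> omega
      interval_cases c <;> (simp only [Set.mem_insert_iff, Set.mem_singleton_iff, Prod.mk.injEq]; norm_num)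
  · -- a = 2 : show b ≤ 3
    have hb3 : b ≤ 3 := by
      by_contra hB
      obtain ⟨x, y, z, e⟩ := h 2
      have n1 := term_nonneg 2 x (by omega)
      have n2 := term_nonneg b y (by omega)
      have n3 := term_nonneg c z (by omega)
      have h2 := term_zlb b y (by omega)
      have h3 := term_zlb c z (by omega)
      push_cast at e
      have hx1 : -1 ≤ x ∧ x ≤ 1 := by constructor <;> nlinarith [sq_nonneg (x+1), sq_nonneg (x-1)]
      obtain ⟨hx1, hx2⟩ := hx1
      interval_cases x <;> omega
    interval_cases b
    · -- a = 2, b = 2 : show c ≤ 6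
      have hc6 : c ≤ 6 := by
        by_contra hC
        obtain ⟨x, y, z, e⟩ := h 5
        have n1 := term_nonneg 2 x (by omega)
        have n2 := term_nonneg 2 y (by omega)
        have n3 := term_nonneg c z (by omega)
        have h3 := term_zlb c z (by omega)
        push_cast at e
        have hx1 : -2 ≤ x ∧ x ≤ 2 := by constructor <;> nlinarith [sq_nonneg (x+2), sq_nonneg (x-2)]
        have hy1 : -2 ≤ y ∧ y ≤ 2 := by constructor <;> nlinarith [sq_nonneg (y+2), sq_nonneg (y-2)]
        obtain ⟨hx1, hx2⟩ := hx1
        obtain ⟨hy1, hy2⟩ := hy1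
        interval_cases x <;> interval_cases y <;> omega
      interval_cases c <;> (simp only [Set.mem_insert_iff, Set.mem_singleton_iff, Prod.mk.injEq]; norm_num)
    · -- a = 2, b = 3 : show c ≤ 10 and c ≠ 6
      have hc10 : c ≤ 10 := by
        by_contra hC
        obtain ⟨x, y, z, e⟩ := h 9
        have n1 := term_nonneg 2 x (by omega)
        have n2 := term_nonneg 3 y (by omega)
        have n3 := term_nonneg c z (by omega)
        have h3 := term_zlb c z (by omega)
        push_cast at e
        have hx1 : -2 ≤ x ∧ x ≤ 2 := by constructor <;> nlinarith [sq_nonneg (x+2), sq_nonneg (x-2)]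
        have hy1 : -1 ≤ y ∧ y ≤ 1 := by constructor <;> nlinarith [sq_nonneg (y+1), sq_nonneg (y-1)]
        obtain ⟨hx1, hx2⟩ := hx1
        obtain ⟨hy1, hy2⟩ := hy1
        interval_cases x <;> interval_cases y <;> omega
      have hc6 : c ≠ 6 := by
        rintro rfl
        obtain ⟨x, y, z, e⟩ := h 48
        have n1 := term_nonneg 2 x (by omega)
        have n2 := term_nonneg 3 y (by omega)
        have n3 := term_nonneg 6 z (by omega)
        push_cast at e
        have hx1 : -5 ≤ x ∧ x ≤ 4 := by constructor <;> nlinarith [sq_nonneg (x+5), sq_nonneg (x-4)]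
        have hy1 : -4 ≤ y ∧ y ≤ 3 := by constructor <;> nlinarith [sq_nonneg (y+4), sq_nonneg (y-3)]
        have hz1 : -2 ≤ z ∧ z ≤ 2 := by constructor <;> nlinarith [sq_nonneg (z+2), sq_nonneg (z-2)]
        obtain ⟨hx1, hx2⟩ := hx1
        obtain ⟨hy1, hy2⟩ := hy1
        obtain ⟨hz1, hz2⟩ := hz1
        interval_cases x <;> interval_cases y <;> interval_cases z <;> omega
      interval_cases c <;> first
        | exact absurd rfl hc6
        | (simp only [Set.mem_insert_iff, Set.mem_singleton_iff, Prod.mk.injEq]; norm_num)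
end

section
/- For every nonnegative integer n, there exist integers x, y, z such that n = x(x+1) + y(2y+1) + z(3z+1). -/
/-!
Since `24 (x (x + 1) + y (2y + 1) + z (3z + 1)) + 11 = 6 (2x + 1)² + 3 (4y + 1)² + 2 (6z + 1)²`,
it suffices to write `24 n + 11 = 6 a² + 3 b² + 2 c²` with `a` odd: then `b ≡ ±1 (mod 4)` and
`c ≡ ±1 (mod 6)` are forced by congruences. As `24 n + 11 ≡ 3 (mod 8)`, it is a sum of three
squares, all odd and exactly one of them divisible by `3`; writing the other two as `c ± 3 s` gives
`2 c² + 18 s² + 9 t²`, which an explicit change of variables turns into `6 a² + 3 b² + 2 c²`.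

The three-square theorem for `N ≡ 3 (mod 8)` is proved in Gauss's way. A Dirichlet prime
`q ≡ N - 2 (mod 4 N)` makes `-N` a square modulo `q` by quadratic reciprocity, and this yields a
positive definite integral ternary form of determinant `1` representing `N`. Hermite's reduction
shows that every such form is equivalent to `x² + y² + z²`.
-/

open Matrix

lemma exists_four_mul_sq_le (m t : ℤ) (hm : 0 < m) : ∃ x : ℤ, 4 * (m * x + t) ^ 2 ≤ m ^ 2 := by
  have h₀ : 0 ≤ t % m := Int.emod_nonneg t hm.ne'
  have h₁ : t % m < m := Int.emod_lt_of_pos t hm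
  have h₂ : m * (t / m) + t % m = t := Int.mul_ediv_add_emod t m
  rcases le_or_gt (2 * (t % m)) m with h | h
  · exact ⟨-(t / m), by nlinarith⟩
  · exact ⟨-(t / m) - 1, by nlinarith⟩

section BinaryForms

def binForm (a b c x y : ℤ) : ℤ := a * x ^ 2 + 2 * b * x * y + c * y ^ 2

lemma mul_binForm (a b c x y : ℤ) :
    a * binForm a b c x y = (a * x + b * y) ^ 2 + (a * c - b ^ 2) * y ^ 2 := by
  unfold binForm; ring

lemma binForm_pos {a b c x y : ℤ} (ha : 0 < a) (hdet : 0 < a * c - b ^ 2) (hxy : x ≠ 0 ∨ y ≠ 0) :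
    0 < binForm a b c x y := by
  have hpos : 0 < (a * x + b * y) ^ 2 + (a * c - b ^ 2) * y ^ 2 := by
    rcases eq_or_ne y 0 with rfl | hy
    · have : a * x ≠ 0 := mul_ne_zero ha.ne' (hxy.resolve_right (absurd rfl))
      simp only [mul_zero, add_zero, ne_eq, OfNat.ofNat_ne_zero, not_false_eq_true, zero_pow]
      positivity
    · positivity
  rw [← mul_binForm] at hpos
  exact pos_of_mul_pos_right hpos ha.le

/-- Lagrange's reduction: translate `x` so that `4 b² ≤ a²`; then either `a ≤ c` and `(1, 0)`
works, or the form with `a` and `c` swapped has a smaller leading coefficient. -/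
lemma exists_binForm_sq_le (a b c : ℤ) (ha : 0 < a) (hdet : 0 < a * c - b ^ 2) :
    ∃ x y : ℤ, (x ≠ 0 ∨ y ≠ 0) ∧ 3 * binForm a b c x y ^ 2 ≤ 4 * (a * c - b ^ 2) := by
  induction hn : a.toNat using Nat.strong_induction_on generalizing a b c with
  | _ n ih =>
    obtain ⟨k, hk⟩ := exists_four_mul_sq_le a b ha
    set r := a * k + b
    set c' := binForm a b c k 1
    have hdet' : a * c' - r ^ 2 = a * c - b ^ 2 := by unfold c' r binForm; ring
    have hc' : 0 < c' := by nlinarith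
    rcases le_or_gt a c' with hac | hac
    · refine ⟨1, 0, by simp, ?_⟩
      simp only [binForm]
      nlinarith
    · obtain ⟨x, y, hxy, hle⟩ := ih c'.toNat (by omega) c' r a hc' (by linarith) rfl
      refine ⟨y + k * x, x, ?_, ?_⟩
      · by_contra! h
        exact hxy.elim (· h.2) (fun hy => hy (by simpa [h.2] using h.1))
      · have : binForm a b c (y + k * x) x = binForm c' r a x y := by
          unfold c' r binForm; ring
        rw [this]; linarith

lemma exists_sq_add_sq_of_binForm {a b c : ℤ} (ha : 0 < a) (hdet : a * c - b ^ 2 = 1) (x y : ℤ) :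
    ∃ u v : ℤ, binForm a b c x y = u ^ 2 + v ^ 2 := by
  obtain ⟨p, q, hpq, hle⟩ := exists_binForm_sq_le a b c ha (by omega)
  have hval : binForm a b c p q = 1 := by
    have := binForm_pos ha (by omega : 0 < a * c - b ^ 2) hpq
    nlinarith
  obtain ⟨s, t, hst⟩ : IsCoprime p q :=
    ⟨a * p + 2 * b * q, c * q, by rw [← hval]; unfold binForm; ring⟩
  -- in the basis `(p, q), (-t, s)` the form becomes `u² + 2 d u v + e v²` with `e - d² = 1`
  set d := a * p * -t + b * (p * s + -t * q) + c * q * s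
  set e := binForm a b c (-t) s
  have he : e - d ^ 2 = 1 := by
    have : binForm a b c p q * e - d ^ 2 = (a * c - b ^ 2) * (s * p + t * q) ^ 2 := by
      unfold e d binForm; ring
    rwa [hval, hdet, hst, one_mul, one_pow, one_mul] at this
  have hchange (u v : ℤ) :
      binForm a b c (p * u - t * v) (q * u + s * v) = (u + d * v) ^ 2 + v ^ 2 := by
    have : binForm a b c (p * u - t * v) (q * u + s * v)
        = binForm a b c p q * u ^ 2 + 2 * d * u * v + e * v ^ 2 := by
      unfold d e binForm; ring
    rw [this, hval]
    linear_combination v ^ 2 * he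
  have hx : p * (s * x + t * y) - t * (-q * x + p * y) = x := by linear_combination x * hst
  have hy : q * (s * x + t * y) + s * (-q * x + p * y) = y := by linear_combination y * hst
  exact ⟨_, _, hx ▸ hy ▸ hchange _ _⟩

end BinaryForms

lemma Matrix.PosDef.isSymm_int {ι : Type*} {S : Matrix ι ι ℤ} (hS : S.PosDef) : S.IsSymm :=
  isHermitian_iff_isSymm.1 hS.1

section IntegralQuadraticForms

variable {ι : Type*} [Fintype ι]

lemma dotProduct_mulVec_transpose_mul_mul {R : Type*} [CommRing R] (S M : Matrix ι ι R)
    (v : ι → R) : v ⬝ᵥ (Mᵀ * S * M) *ᵥ v = (M *ᵥ v) ⬝ᵥ S *ᵥ (M *ᵥ v) := by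
  rw [← mulVec_mulVec, ← mulVec_mulVec, dotProduct_mulVec, vecMul_transpose]

lemma smul_dotProduct_mulVec_smul {R : Type*} [CommRing R] (S : Matrix ι ι R) (t : R)
    (v : ι → R) : (t • v) ⬝ᵥ S *ᵥ (t • v) = t ^ 2 * (v ⬝ᵥ S *ᵥ v) := by
  rw [mulVec_smul, dotProduct_smul, smul_dotProduct, smul_eq_mul, smul_eq_mul]; ring

namespace Matrix.PosDef

variable {S : Matrix ι ι ℤ}

lemma dotProduct_mulVec_pos_int (hS : S.PosDef) {v : ι → ℤ} (hv : v ≠ 0) :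
    0 < v ⬝ᵥ S *ᵥ v := by
  simpa using hS.dotProduct_mulVec_pos hv

lemma transpose_mul_mul [DecidableEq ι] {M : Matrix ι ι ℤ} (hS : S.PosDef) (hM : IsUnit M) :
    (Mᵀ * S * M).PosDef := by
  simpa [conjTranspose_eq_transpose_of_trivial] using
    hS.conjTranspose_mul_mul_same (mulVec_injective_of_isUnit hM)

lemma exists_forall_le [DecidableEq ι] [Nonempty ι] (hS : S.PosDef) :
    ∃ v₀ ≠ 0, ∀ v ≠ 0, v₀ ⬝ᵥ S *ᵥ v₀ ≤ v ⬝ᵥ S *ᵥ v := by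
  obtain ⟨_, ⟨v₀, hv₀, rfl⟩, hmin⟩ :=
    Int.exists_least_of_bdd (P := fun k => ∃ v ≠ 0, v ⬝ᵥ S *ᵥ v = k)
      ⟨0, fun _ ⟨v, hv, hk⟩ => hk ▸ (hS.dotProduct_mulVec_pos_int hv).le⟩
      ⟨_, Pi.single (Classical.arbitrary ι) 1, by simp, rfl⟩
  exact ⟨v₀, hv₀, fun v hv => hmin _ ⟨v, hv, rfl⟩⟩

lemma isUnit_of_forall_dvd_of_forall_le (hS : S.PosDef) {v₀ : ι → ℤ} (hv₀ : v₀ ≠ 0)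
    (hmin : ∀ v ≠ 0, v₀ ⬝ᵥ S *ᵥ v₀ ≤ v ⬝ᵥ S *ᵥ v) {d : ℤ} (hd : ∀ i, d ∣ v₀ i) : IsUnit d := by
  choose w hw using hd
  have hv₀w : v₀ = d • w := funext hw
  have hw₀ : w ≠ 0 := by rintro rfl; simp [hv₀w] at hv₀
  have hd₀ : d ≠ 0 := by rintro rfl; simp [hv₀w] at hv₀
  have hQw := hS.dotProduct_mulVec_pos_int hw₀
  have hle := hmin w hw₀
  rw [hv₀w, smul_dotProduct_mulVec_smul] at hle
  have : d ^ 2 ≤ 1 := le_of_mul_le_mul_right (by linarith) hQw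
  have : -1 ≤ d ∧ d ≤ 1 := by constructor <;> nlinarith
  rw [Int.isUnit_iff]
  omega

end Matrix.PosDef

end IntegralQuadraticForms

section TernaryForms

lemma exists_det_eq_one_mulVec_single_eq {v : Fin 3 → ℤ}
    (hv : ∀ d : ℤ, (∀ i, d ∣ v i) → IsUnit d) :
    ∃ M : Matrix (Fin 3) (Fin 3) ℤ, M.det = 1 ∧ M *ᵥ Pi.single 0 1 = v := by
  obtain ⟨α, β, hα, hβ, hαβ⟩ := extract_gcd (v 0) (v 1)
  set g := gcd (v 0) (v 1)
  obtain ⟨p, q, hpq⟩ := (gcd_isUnit_iff α β).1 hαβ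
  obtain ⟨u, w, huw⟩ : IsCoprime g (v 2) := by
    refine (gcd_isUnit_iff _ _).1 (hv _ fun i => ?_)
    fin_cases i
    · exact (gcd_dvd_left _ _).trans (gcd_dvd_left _ _)
    · exact (gcd_dvd_left _ _).trans (gcd_dvd_right _ _)
    · exact gcd_dvd_right _ _
  refine ⟨!![v 0, -q, -(w * α); v 1, p, -(w * β); v 2, 0, u], ?_, ?_⟩
  · rw [det_fin_three]
    simp only [of_apply, cons_val', cons_val_zero, cons_val_one, cons_val_two, empty_val',
      cons_val_fin_one, head_cons, tail_cons, head_fin_const]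
    linear_combination u * p * hα + u * q * hβ + (u * g + w * v 2) * hpq + huw
  · ext i; fin_cases i <;> simp

variable {S : Matrix (Fin 3) (Fin 3) ℤ}

def schurForm (S : Matrix (Fin 3) (Fin 3) ℤ) : ℤ → ℤ → ℤ :=
  binForm (S 0 0 * S 1 1 - S 0 1 ^ 2) (S 0 0 * S 1 2 - S 0 1 * S 0 2) (S 0 0 * S 2 2 - S 0 2 ^ 2)

lemma Matrix.IsSymm.mul_dotProduct_mulVec_fin_three (hS : S.IsSymm) (v : Fin 3 → ℤ) :
    S 0 0 * (v ⬝ᵥ S *ᵥ v) =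
      (S 0 0 * v 0 + S 0 1 * v 1 + S 0 2 * v 2) ^ 2 + schurForm S (v 1) (v 2) := by
  simp only [dotProduct, mulVec, Fin.sum_univ_three, schurForm, binForm, hS.apply 0 1,
    hS.apply 0 2, hS.apply 1 2]
  ring

lemma Matrix.IsSymm.schurForm_det (hS : S.IsSymm) :
    (S 0 0 * S 1 1 - S 0 1 ^ 2) * (S 0 0 * S 2 2 - S 0 2 ^ 2) - (S 0 0 * S 1 2 - S 0 1 * S 0 2) ^ 2
      = S 0 0 * S.det := by
  rw [det_fin_three, hS.apply 0 1, hS.apply 0 2, hS.apply 1 2]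
  ring

lemma Matrix.IsSymm.posDef_fin_three (hS : S.IsSymm) (h₀ : 0 < S 0 0)
    (h₁ : 0 < S 0 0 * S 1 1 - S 0 1 ^ 2) (h₂ : 0 < S.det) : S.PosDef := by
  refine PosDef.of_dotProduct_mulVec_pos (isHermitian_iff_isSymm.2 hS) fun v hv => ?_
  rw [star_trivial]
  refine pos_of_mul_pos_right (a := S 0 0) ?_ h₀.le
  rw [hS.mul_dotProduct_mulVec_fin_three]
  by_cases hyz : v 1 ≠ 0 ∨ v 2 ≠ 0
  · have : 0 < schurForm S (v 1) (v 2) := binForm_pos h₁ (hS.schurForm_det ▸ mul_pos h₀ h₂) hyz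
    positivity
  · push Not at hyz
    have hx : v 0 ≠ 0 := fun hx => hv (by ext i; fin_cases i <;> simp [hx, hyz])
    have : S 0 0 * v 0 ≠ 0 := mul_ne_zero h₀.ne' hx
    simp only [hyz, schurForm, binForm, mul_zero, add_zero, ne_eq, OfNat.ofNat_ne_zero,
      not_false_eq_true, zero_pow]
    positivity

namespace Matrix.PosDef

lemma apply_zero_zero_pos (hS : S.PosDef) : 0 < S 0 0 := by
  simpa using hS.dotProduct_mulVec_pos_int (v := Pi.single 0 1) (by simp)

lemma minor_pos (hS : S.PosDef) : 0 < S 0 0 * S 1 1 - S 0 1 ^ 2 := by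
  have h := hS.dotProduct_mulVec_pos_int (v := ![-S 0 1, S 0 0, 0])
    (by simp [hS.apply_zero_zero_pos.ne'])
  have : ![-S 0 1, S 0 0, 0] ⬝ᵥ S *ᵥ ![-S 0 1, S 0 0, 0] = S 0 0 * (S 0 0 * S 1 1 - S 0 1 ^ 2) := by
    simp only [dotProduct, mulVec, Fin.sum_univ_three, hS.isSymm_int.apply 0 1, cons_val_zero,
      cons_val_one, cons_val, mul_neg, neg_mul, mul_zero, zero_mul, add_zero]
    ring
  rw [this] at h
  exact pos_of_mul_pos_right h hS.apply_zero_zero_pos.le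

/-- Hermite's argument: the Schur complement, a binary form of determinant `S₀₀`, takes a value `k`
with `3 k² ≤ 4 S₀₀`, while minimality of `S₀₀` forces `3 S₀₀² ≤ 4 k`; so `27 S₀₀³ ≤ 64`. -/
lemma apply_zero_zero_eq_one (hS : S.PosDef) (hdet : S.det = 1)
    (hmin : ∀ v ≠ 0, S 0 0 ≤ v ⬝ᵥ S *ᵥ v) : S 0 0 = 1 := by
  have hm : 0 < S 0 0 := hS.apply_zero_zero_pos
  obtain ⟨y, z, hyz, hK⟩ := exists_binForm_sq_le _ _ _ hS.minor_pos
    (by rw [hS.isSymm_int.schurForm_det, hdet]; positivity)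
  change 3 * schurForm S y z ^ 2 ≤ _ at hK
  rw [hS.isSymm_int.schurForm_det, hdet, mul_one] at hK
  obtain ⟨x, hx⟩ := exists_four_mul_sq_le (S 0 0) (S 0 1 * y + S 0 2 * z) hm
  have hv : ![x, y, z] ≠ 0 := fun h => hyz.elim (· (by simpa using congrFun h 1))
    (· (by simpa using congrFun h 2))
  have hQ := hS.isSymm_int.mul_dotProduct_mulVec_fin_three ![x, y, z]
  simp only [cons_val_zero, cons_val_one, cons_val_two, Nat.succ_eq_add_one, Nat.reduceAdd,
    tail_cons, head_cons] at hQ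
  have h₁ := mul_le_mul_of_nonneg_left (hmin _ hv) hm.le
  have h₂ : 3 * S 0 0 ^ 2 ≤ 4 * schurForm S y z := by nlinarith
  have h₃ : 9 * S 0 0 ^ 4 ≤ 16 * schurForm S y z ^ 2 := by nlinarith
  by_contra hne
  have h₄ : 8 ≤ S 0 0 ^ 3 := by
    have : 2 ≤ S 0 0 := by omega
    nlinarith
  nlinarith

lemma exists_sum_three_sq_of_apply_zero_zero (hS : S.PosDef) (hdet : S.det = 1) (h₀ : S 0 0 = 1)
    (v : Fin 3 → ℤ) : ∃ x y z : ℤ, v ⬝ᵥ S *ᵥ v = x ^ 2 + y ^ 2 + z ^ 2 := by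
  obtain ⟨y, z, hyz⟩ := exists_sq_add_sq_of_binForm hS.minor_pos
    (by rw [hS.isSymm_int.schurForm_det, hdet, h₀, one_mul]) (v 1) (v 2)
  refine ⟨S 0 0 * v 0 + S 0 1 * v 1 + S 0 2 * v 2, y, z, ?_⟩
  rw [← one_mul (_ ⬝ᵥ _), ← h₀, hS.isSymm_int.mul_dotProduct_mulVec_fin_three, schurForm, hyz, h₀]
  ring

theorem exists_sum_three_sq (hS : S.PosDef) (hdet : S.det = 1) (v : Fin 3 → ℤ) :
    ∃ x y z : ℤ, v ⬝ᵥ S *ᵥ v = x ^ 2 + y ^ 2 + z ^ 2 := by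
  -- a minimal vector is primitive, so it is the first column of a unimodular `M`
  obtain ⟨v₀, hv₀, hmin⟩ := hS.exists_forall_le
  obtain ⟨M, hM, hMv₀⟩ := exists_det_eq_one_mulVec_single_eq
    fun _ => hS.isUnit_of_forall_dvd_of_forall_le hv₀ hmin
  have hMu : IsUnit M := (isUnit_iff_isUnit_det M).2 (hM ▸ isUnit_one)
  have hS' := hS.transpose_mul_mul hMu
  have hdet' : (Mᵀ * S * M).det = 1 := by simp [hM, hdet]
  have h₀ : (Mᵀ * S * M) 0 0 = v₀ ⬝ᵥ S *ᵥ v₀ := by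
    rw [← hMv₀, ← dotProduct_mulVec_transpose_mul_mul]; simp
  have hmin' : ∀ w ≠ 0, (Mᵀ * S * M) 0 0 ≤ w ⬝ᵥ (Mᵀ * S * M) *ᵥ w := fun w hw => by
    rw [h₀, dotProduct_mulVec_transpose_mul_mul]
    exact hmin _ fun h => hw (mulVec_injective_of_isUnit hMu (h.trans (mulVec_zero M).symm))
  obtain ⟨w, rfl⟩ := mulVec_surjective_iff_isUnit.2 hMu v
  rw [← dotProduct_mulVec_transpose_mul_mul]
  exact hS'.exists_sum_three_sq_of_apply_zero_zero hdet' (hS'.apply_zero_zero_eq_one hdet' hmin') w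

end Matrix.PosDef

end TernaryForms

section ThreeSquares

lemma exists_prime_emod_four_eq_one_dvd_add_two {N : ℕ} (hN : N % 4 = 3) :
    ∃ q : ℕ, q.Prime ∧ q % 4 = 1 ∧ N ∣ q + 2 := by
  have : NeZero (4 * N) := ⟨by omega⟩
  have hcop : Nat.Coprime (N - 2) (2 ^ 2 * N) := by
    refine Nat.Coprime.mul_right (.pow_right 2 ?_) ?_
    · exact Nat.coprime_two_right.2 (Nat.odd_iff.2 (by omega))
    · rw [Nat.coprime_self_sub_left (by omega)]
      exact Nat.coprime_two_left.2 (Nat.odd_iff.2 (by omega))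
  obtain ⟨q, -, hq, hqN⟩ :=
    Nat.forall_exists_prime_gt_and_eq_mod ((ZMod.isUnit_iff_coprime _ (4 * N)).2 hcop) 0
  have hmod : q ≡ N - 2 [MOD 4 * N] := (ZMod.natCast_eq_natCast_iff _ _ _).1 hqN
  refine ⟨q, hq, ?_, ?_⟩
  · have := hmod.of_mul_right N
    unfold Nat.ModEq at this; omega
  · have := (hmod.of_mul_left 4).add_right 2
    rw [Nat.sub_add_cancel (by omega)] at this
    exact (Nat.modEq_zero_iff_dvd).1 (this.trans (Nat.modEq_zero_iff_dvd.2 dvd_rfl))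

lemma isSquare_neg_of_dvd_add_two {N q : ℕ} [Fact q.Prime] (hN : N % 8 = 3) (hq : q % 4 = 1)
    (hNq : N ∣ q + 2) : IsSquare (-(N : ZMod q)) := by
  have hNodd : Odd N := Nat.odd_iff.2 (by omega)
  have hqN : ¬ q ∣ N := fun h => by
    have := Nat.le_of_dvd two_pos ((Nat.dvd_add_right (dvd_refl q)).1 (h.trans hNq))
    have := (Fact.out : q.Prime).two_le
    omega
  have hqmod : (q : ℤ) % (N : ℕ) = -2 % (N : ℕ) := by
    obtain ⟨k, hk⟩ := hNq
    rw [show (q : ℤ) = -2 + N * k by omega, Int.add_mul_emod_self_left]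
  have hleg : legendreSym q (-N) = 1 := by
    rw [neg_eq_neg_one_mul, legendreSym.mul, legendreSym.at_neg_one (by omega),
      ZMod.χ₄_nat_one_mod_four hq, jacobiSym.legendreSym.to_jacobiSym,
      jacobiSym.quadratic_reciprocity_one_mod_four' hNodd hq,
      jacobiSym.mod_left' hqmod, jacobiSym.at_neg_two hNodd, ZMod.χ₈'_nat_eq_if_mod_eight]
    simp [Nat.odd_iff.1 hNodd, hN]
  simpa using (legendreSym.eq_one_iff q (by simpa [ZMod.natCast_eq_zero_iff] using hqN)).1 hleg

lemma exists_two_mul_dvd_sq_add {q D b₀ : ℤ} (hq : Odd q) (h : q ∣ b₀ ^ 2 + D) :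
    ∃ b, 2 * q ∣ b ^ 2 + D := by
  have h2q : IsCoprime 2 q := by obtain ⟨k, rfl⟩ := hq; exact ⟨-k, 1, by ring⟩
  rcases Int.even_or_odd (b₀ + D) with hb | hb
  · refine ⟨b₀, h2q.mul_dvd (even_iff_two_dvd.1 ?_) h⟩
    simpa [Int.even_add, Int.even_pow] using hb
  · refine ⟨b₀ + q, h2q.mul_dvd (even_iff_two_dvd.1 ?_) ?_⟩
    · rw [← Int.not_even_iff_odd] at hb hq
      simp only [Int.even_add, Int.even_pow] at hb hq ⊢
      tauto
    · rw [show (b₀ + q) ^ 2 + D = b₀ ^ 2 + D + q * (2 * b₀ + q) by ring]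
      exact h.add (dvd_mul_right _ _)

lemma exists_posDef_det_eq_one {N q s Δ b : ℤ} (hN : 0 < N) (hq : 0 < q)
    (hNΔ : N * Δ = 1 + 2 * q * s ^ 2) (hb : 2 * q ∣ b ^ 2 + Δ) :
    ∃ S : Matrix (Fin 3) (Fin 3) ℤ, S.PosDef ∧ S.det = 1 ∧ S 2 2 = N := by
  obtain ⟨c, hc⟩ := hb
  have hΔ : 0 < Δ := pos_of_mul_pos_right (hNΔ ▸ by positivity) hN.le
  have hdet : !![2 * q, b, 0; b, c, s; 0, s, N].det = 1 := by
    rw [det_fin_three]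
    simp only [of_apply, cons_val', cons_val_zero, cons_val_fin_one, cons_val_one, cons_val,
      mul_zero, add_zero, zero_mul, sub_zero]
    linear_combination hNΔ - N * hc
  refine ⟨!![2 * q, b, 0; b, c, s; 0, s, N], ?_, hdet, rfl⟩
  have hS : (!![2 * q, b, 0; b, c, s; 0, s, N]).IsSymm := by
    ext i j; fin_cases i <;> fin_cases j <;> rfl
  refine hS.posDef_fin_three (by simpa using hq) ?_ (by rw [hdet]; exact one_pos)
  simp only [of_apply, cons_val', cons_val_zero, cons_val_fin_one, cons_val_one]
  linarith

lemma exists_posDef_det_eq_one_apply_two_two {N : ℕ} (hN : N % 8 = 3) :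
    ∃ S : Matrix (Fin 3) (Fin 3) ℤ, S.PosDef ∧ S.det = 1 ∧ S 2 2 = N := by
  obtain ⟨q, hq, hq4, k, hk⟩ := exists_prime_emod_four_eq_one_dvd_add_two (N := N) (by omega)
  have : Fact q.Prime := ⟨hq⟩
  obtain ⟨s, hs⟩ : ∃ s : ℤ, 2 * s = N + 1 := ⟨(N + 1) / 2, by omega⟩
  -- `Δ := (1 + 2 q s²) / N` is an integer because `q ≡ -2` and `2 s ≡ 1 (mod N)`
  have hNΔ : (N : ℤ) * (2 * k * s ^ 2 - N - 2) = 1 + 2 * q * s ^ 2 := by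
    have hk' : (q : ℤ) + 2 = N * k := by exact_mod_cast hk
    linear_combination (-2 * s ^ 2) * hk' + (2 * s + N + 1) * hs
  -- `-Δ ≡ -N Δ² (mod q)` is a square since `-N` is
  obtain ⟨b₀, hb₀⟩ : ∃ b₀ : ℤ, (q : ℤ) ∣ b₀ ^ 2 + (2 * k * s ^ 2 - N - 2) := by
    obtain ⟨γ, hγ⟩ := isSquare_neg_of_dvd_add_two hN hq4 ⟨k, hk⟩
    obtain ⟨g, rfl⟩ := ZMod.intCast_surjective γ
    refine ⟨g * (2 * k * s ^ 2 - N - 2), (ZMod.intCast_zmod_eq_zero_iff_dvd _ q).1 ?_⟩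
    have hNΔq := congrArg (Int.cast : ℤ → ZMod q) hNΔ
    push_cast [ZMod.natCast_self] at hNΔq ⊢
    linear_combination (-(2 * k * s ^ 2 - N - 2 : ZMod q) ^ 2) * hγ -
      (2 * k * s ^ 2 - N - 2 : ZMod q) * hNΔq
  obtain ⟨b, hb⟩ :=
    exists_two_mul_dvd_sq_add ((Int.odd_coe_nat q).2 (hq.odd_of_ne_two (by omega))) hb₀
  exact exists_posDef_det_eq_one (by omega) (by exact_mod_cast hq.pos) hNΔ hb

theorem exists_sum_three_sq_of_emod_eight_eq_three {N : ℕ} (hN : N % 8 = 3) :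
    ∃ x y z : ℤ, (N : ℤ) = x ^ 2 + y ^ 2 + z ^ 2 := by
  obtain ⟨S, hS, hdet, hN⟩ := exists_posDef_det_eq_one_apply_two_two hN
  simpa [hN] using hS.exists_sum_three_sq hdet (Pi.single 2 1)

end ThreeSquares

section Congruences

lemma sq_emod_eight (x : ℤ) :
    x % 2 = 1 ∧ x ^ 2 % 8 = 1 ∨ x % 2 = 0 ∧ (x ^ 2 % 8 = 0 ∨ x ^ 2 % 8 = 4) := by
  rcases (by omega : x % 8 = 0 ∨ x % 8 = 1 ∨ x % 8 = 2 ∨ x % 8 = 3 ∨ x % 8 = 4 ∨ x % 8 = 5 ∨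
    x % 8 = 6 ∨ x % 8 = 7) with h | h | h | h | h | h | h | h <;>
  simp [pow_two, Int.mul_emod, h] <;> omega

lemma sq_emod_three (x : ℤ) : x % 3 = 0 ∧ x ^ 2 % 3 = 0 ∨ x % 3 ≠ 0 ∧ x ^ 2 % 3 = 1 := by
  rcases (by omega : x % 3 = 0 ∨ x % 3 = 1 ∨ x % 3 = 2) with h | h | h <;>
  simp [pow_two, Int.mul_emod, h]

lemma exists_sq_eq_sq_mul_add_one {m c : ℤ} (h : c % m = 1 ∨ c % m = m - 1) :
    ∃ z, c ^ 2 = (m * z + 1) ^ 2 := by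
  have hc := Int.mul_ediv_add_emod c m
  rcases h with h | h
  · exact ⟨c / m, by rw [h] at hc; rw [hc]⟩
  · exact ⟨-(c / m) - 1, by rw [h] at hc; linear_combination (-(c + m * (c / m) + m - 1)) * hc⟩

lemma exists_sq_add_sq_eq_two_mul_sq_add_eighteen_mul_sq {X Y : ℤ} (hX : X % 6 = 1 ∨ X % 6 = 5)
    (hY : Y % 6 = 1 ∨ Y % 6 = 5) : ∃ c s : ℤ, X ^ 2 + Y ^ 2 = 2 * c ^ 2 + 18 * s ^ 2 := by
  obtain ⟨Y', ⟨s, hs⟩, hY'⟩ : ∃ Y', 6 ∣ X - Y' ∧ Y' ^ 2 = Y ^ 2 := by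
    rcases hX with hX | hX <;> rcases hY with hY | hY
    exacts [⟨Y, by omega, rfl⟩, ⟨-Y, by omega, neg_sq Y⟩, ⟨-Y, by omega, neg_sq Y⟩,
      ⟨Y, by omega, rfl⟩]
  exact ⟨X - 3 * s, s, by rw [← hY', show Y' = X - 6 * s by omega]; ring⟩

lemma exists_two_mul_sq_add_eighteen_mul_sq_add_nine_mul_sq {X Y Z N : ℤ}
    (h : X ^ 2 + Y ^ 2 + Z ^ 2 = N) (hN : N % 24 = 11) :
    ∃ c s t : ℤ, 2 * c ^ 2 + 18 * s ^ 2 + 9 * t ^ 2 = N := by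
  have key (X Y t : ℤ) (h : X ^ 2 + Y ^ 2 + (3 * t) ^ 2 = N) (hX : X % 6 = 1 ∨ X % 6 = 5)
      (hY : Y % 6 = 1 ∨ Y % 6 = 5) : ∃ c s t : ℤ, 2 * c ^ 2 + 18 * s ^ 2 + 9 * t ^ 2 = N := by
    obtain ⟨c, s, hcs⟩ := exists_sq_add_sq_eq_two_mul_sq_add_eighteen_mul_sq hX hY
    exact ⟨c, s, t, by rw [← h, hcs]; ring⟩
  have hodd : X % 2 = 1 ∧ Y % 2 = 1 ∧ Z % 2 = 1 := by
    have := sq_emod_eight X; have := sq_emod_eight Y; have := sq_emod_eight Z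
    generalize X ^ 2 = A, Y ^ 2 = B, Z ^ 2 = C at *; omega
  have h₃ : Z % 3 = 0 ∧ X % 3 ≠ 0 ∧ Y % 3 ≠ 0 ∨ Y % 3 = 0 ∧ X % 3 ≠ 0 ∧ Z % 3 ≠ 0 ∨
      X % 3 = 0 ∧ Y % 3 ≠ 0 ∧ Z % 3 ≠ 0 := by
    have := sq_emod_three X; have := sq_emod_three Y; have := sq_emod_three Z
    generalize X ^ 2 = A, Y ^ 2 = B, Z ^ 2 = C at *; omega
  rcases h₃ with ⟨h₁, h₂, h₃⟩ | ⟨h₁, h₂, h₃⟩ | ⟨h₁, h₂, h₃⟩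
  · obtain ⟨t, rfl⟩ : 3 ∣ Z := by omega
    exact key X Y t h (by omega) (by omega)
  · obtain ⟨t, rfl⟩ : 3 ∣ Y := by omega
    exact key X Z t (by rw [← h]; ring) (by omega) (by omega)
  · obtain ⟨t, rfl⟩ : 3 ∣ X := by omega
    exact key Y Z t (by rw [← h]; ring) (by omega) (by omega)

lemma exists_six_mul_sq_add_three_mul_sq_add_two_mul_sq {c s t N : ℤ}
    (h : 2 * c ^ 2 + 18 * s ^ 2 + 9 * t ^ 2 = N) (hN : N % 8 = 3) :
    ∃ a b c' : ℤ, a % 2 = 1 ∧ 6 * a ^ 2 + 3 * b ^ 2 + 2 * c' ^ 2 = N := by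
  have := sq_emod_eight c; have := sq_emod_eight s; have := sq_emod_eight t
  have ht : t % 2 = 1 := by generalize c ^ 2 = A, s ^ 2 = B, t ^ 2 = C at *; omega
  rcases (by omega : s % 2 = 0 ∨ s % 2 = 1) with hs | hs
  · exact ⟨t + s, t - 2 * s, c, by omega, by linear_combination h⟩
  · have hc : c % 2 = 0 := by generalize c ^ 2 = A, s ^ 2 = B, t ^ 2 = C at *; omega
    obtain ⟨t', ht', ht'₄⟩ : ∃ t', t' ^ 2 = t ^ 2 ∧ (c + s + t') % 4 = 2 := by
      rcases (by omega : (c + s + t) % 4 = 2 ∨ (c + s + -t) % 4 = 2) with h' | h'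
      · exact ⟨t, rfl, h'⟩
      · exact ⟨-t, neg_sq t, h'⟩
    obtain ⟨a, ha⟩ : ∃ a, c + s + t' = 2 * a := ⟨(c + s + t') / 2, by omega⟩
    exact ⟨a, t' - 2 * s, 2 * (s + t') - a, by omega,
      by linear_combination h - 2 * (2 * a - s - t' + c) * ha + 9 * ht'⟩

lemma exists_eq_of_six_mul_sq_add_three_mul_sq_add_two_mul_sq {n a b c : ℤ} (ha : a % 2 = 1)
    (h : 6 * a ^ 2 + 3 * b ^ 2 + 2 * c ^ 2 = 24 * n + 11) :
    ∃ x y z : ℤ, n = x * (x + 1) + y * (2 * y + 1) + z * (3 * z + 1) := by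
  have hbc : b % 2 = 1 ∧ c % 2 = 1 ∧ c % 3 ≠ 0 := by
    have := sq_emod_eight a; have := sq_emod_eight b; have := sq_emod_eight c
    have := sq_emod_three c
    generalize a ^ 2 = A, b ^ 2 = B, c ^ 2 = C at *; omega
  obtain ⟨y, hy⟩ := exists_sq_eq_sq_mul_add_one (m := 4) (c := b) (by omega)
  obtain ⟨z, hz⟩ := exists_sq_eq_sq_mul_add_one (m := 6) (c := c) (by omega)
  obtain ⟨x, rfl⟩ : ∃ x, a = 2 * x + 1 := ⟨(a - 1) / 2, by omega⟩
  refine ⟨x, y, z, ?_⟩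
  rw [hy, hz] at h
  linarith

end Congruences

theorem stmt_3 (n : ℕ) : ∃ x y z : ℤ, (n : ℤ) = x*(x+1) + y*(2*y+1) + z*(3*z+1) := by
  obtain ⟨X, Y, Z, h⟩ := exists_sum_three_sq_of_emod_eight_eq_three (N := 24 * n + 11) (by omega)
  push_cast at h
  obtain ⟨c, s, t, h⟩ := exists_two_mul_sq_add_eighteen_mul_sq_add_nine_mul_sq h.symm (by omega)
  obtain ⟨a, b, c, ha, h⟩ := exists_six_mul_sq_add_three_mul_sq_add_two_mul_sq h (by omega)
  exact exists_eq_of_six_mul_sq_add_three_mul_sq_add_two_mul_sq ha h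
end

section
/- For every nonnegative integer n, there exist integers x, y, z such that n = x(2x+1) + y(3y+1) + z(3z+1). -/
set_option maxHeartbeats 1000000

namespace Stmt8

/-- transformed coefficients of binary quadratic form p y² + s yz + r z² under
    (y,z) ↦ (a y + b z, c y + d z) -/
def TP (p s r a c : ℤ) : ℤ := p*a^2 + s*a*c + r*c^2
def TS (p s r a b c d : ℤ) : ℤ := 2*p*a*b + s*(a*d+b*c) + 2*r*c*d
def TR (p s r b d : ℤ) : ℤ := p*b^2 + s*b*d + r*d^2

lemma disc_invariant (p s r a b c d : ℤ) :
    4 * TP p s r a c * TR p s r b d - (TS p s r a b c d)^2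
      = (a*d - b*c)^2 * (4*p*r - s^2) := by
  simp only [TP, TS, TR]; ring

lemma TP_comp (p s r a b c d a' b' c' d' : ℤ) :
    TP (TP p s r a c) (TS p s r a b c d) (TR p s r b d) a' c'
      = TP p s r (a*a'+b*c') (c*a'+d*c') := by
  simp only [TP, TS, TR]; ring

lemma TS_comp (p s r a b c d a' b' c' d' : ℤ) :
    TS (TP p s r a c) (TS p s r a b c d) (TR p s r b d) a' b' c' d'
      = TS p s r (a*a'+b*c') (a*b'+b*d') (c*a'+d*c') (c*b'+d*d') := by
  simp only [TP, TS, TR]; ring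

lemma TR_comp (p s r a b c d a' b' c' d' : ℤ) :
    TR (TP p s r a c) (TS p s r a b c d) (TR p s r b d) b' d'
      = TR p s r (a*b'+b*d') (c*b'+d*d') := by
  simp only [TP, TS, TR]; ring

lemma binary_reduce : ∀ n : ℕ, ∀ p s r : ℤ, p.toNat ≤ n → 0 < p → 0 < 4*p*r - s^2 →
    ∃ a b c d : ℤ, a*d - b*c = 1 ∧
      |TS p s r a b c d| ≤ TP p s r a c ∧ TP p s r a c ≤ TR p s r b d := by
  intro n
  induction n using Nat.strong_induction_on with
  | _ n ih =>
    intro p s r hpn hp hdisc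
    -- translation: choose t with s₁ = s - 2 p t ∈ [-p, p)
    set t : ℤ := (s + p) / (2*p) with ht
    have h2p : (0:ℤ) < 2*p := by linarith
    have hrho1 : 0 ≤ (s + p) % (2*p) := Int.emod_nonneg _ (by linarith)
    have hrho2 : (s + p) % (2*p) < 2*p := Int.emod_lt_of_pos _ h2p
    have hdm : 2*p * t + (s + p) % (2*p) = s + p := Int.mul_ediv_add_emod (s+p) (2*p)
    set s₁ : ℤ := s - 2*p*t with hs₁
    have hs₁b : -p ≤ s₁ ∧ s₁ < p := by constructor <;> omega
    -- after translation by (1, -t, 0, 1): (p, s₁, r₁)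
    set r₁ : ℤ := TR p s r (-t) 1 with hr₁
    have hTP1 : TP p s r 1 0 = p := by simp [TP]
    have hTS1 : TS p s r 1 (-t) 0 1 = s₁ := by simp [TS, hs₁]; ring
    have hdisc1 : 0 < 4*p*r₁ - s₁^2 := by
      have := disc_invariant p s r 1 (-t) 0 1
      rw [hTS1, hTP1] at this; simp at this; rw [hr₁]; nlinarith [this]
    by_cases hpr : p ≤ r₁
    · exact ⟨1, -t, 0, 1, by ring, by rw [hTS1, hTP1]; exact abs_le.mpr ⟨hs₁b.1, le_of_lt hs₁b.2⟩, by rw [hTP1]; exact hpr⟩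
    · -- swap: new form (r₁, -s₁, p), r₁ < p, recurse
      push_neg at hpr
      have hr₁pos : 0 < r₁ := by nlinarith [hdisc1, sq_nonneg s₁]
      have hrec := ih (r₁.toNat) (by omega) r₁ (-s₁) p (le_refl _) hr₁pos (by nlinarith)
      obtain ⟨a, b, c, d, hdet, h1, h2⟩ := hrec
      -- total transformation: [[1,-t],[0,1]] * [[0,-1],[1,0]] * [[a,b],[c,d]]
      -- first two compose to [[-t,-1],[1,0]]
      refine ⟨-t*a - c, -t*b - d, a, b, by nlinarith [hdet], ?_, ?_⟩
      · -- need: form (p,s,r) transformed by M equals form (r₁,-s₁,p) transformed by (a,b,c,d)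
        have e1 : TP p s r (-t*a - c) a = TP r₁ (-s₁) p a c := by
          simp only [TP, hr₁, TR, hs₁]; ring
        have e2 : TS p s r (-t*a-c) (-t*b-d) a b = TS r₁ (-s₁) p a b c d := by
          simp only [TS, TP, TR, hr₁, hs₁]; ring
        rw [e1, e2]; exact h1
      · have e1 : TP p s r (-t*a - c) a = TP r₁ (-s₁) p a c := by
          simp only [TP, hr₁, TR, hs₁]; ring
        have e3 : TR p s r (-t*b-d) b = TR r₁ (-s₁) p b d := by
          simp only [TR, TP, hr₁, hs₁]; ring
        rw [e1, e3]; exact h2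


/-- ternary quadratic form with Gram data: Q = a x² + b y² + c z² + 2d xy + 2e xz + 2f yz -/
structure TF where
  a : ℤ
  b : ℤ
  c : ℤ
  d : ℤ
  e : ℤ
  f : ℤ

def TF.Q (A : TF) (x y z : ℤ) : ℤ :=
  A.a*x^2 + A.b*y^2 + A.c*z^2 + 2*A.d*x*y + 2*A.e*x*z + 2*A.f*y*z

def TF.B (A : TF) (u1 u2 u3 v1 v2 v3 : ℤ) : ℤ :=
  A.a*u1*v1 + A.b*u2*v2 + A.c*u3*v3 + A.d*(u1*v2+u2*v1) + A.e*(u1*v3+u3*v1) + A.f*(u2*v3+u3*v2)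

def TF.det (A : TF) : ℤ :=
  A.a*A.b*A.c + 2*A.d*A.e*A.f - A.a*A.f^2 - A.b*A.e^2 - A.c*A.d^2

def TF.PosDef (A : TF) : Prop :=
  ∀ x y z : ℤ, ¬(x = 0 ∧ y = 0 ∧ z = 0) → 0 < A.Q x y z

/-- 3×3 matrix, rows (a b c; d e f; g h i) -/
structure M3 where
  a : ℤ
  b : ℤ
  c : ℤ
  d : ℤ
  e : ℤ
  f : ℤ
  g : ℤ
  h : ℤ
  i : ℤ

def M3.det (M : M3) : ℤ := M.a*(M.e*M.i - M.f*M.h) - M.b*(M.d*M.i - M.f*M.g) + M.c*(M.d*M.h - M.e*M.g)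

def M3.app1 (M : M3) (x y z : ℤ) : ℤ := M.a*x + M.b*y + M.c*z
def M3.app2 (M : M3) (x y z : ℤ) : ℤ := M.d*x + M.e*y + M.f*z
def M3.app3 (M : M3) (x y z : ℤ) : ℤ := M.g*x + M.h*y + M.i*z

def M3.adj (M : M3) : M3 :=
  ⟨M.e*M.i - M.f*M.h, M.c*M.h - M.b*M.i, M.b*M.f - M.c*M.e,
   M.f*M.g - M.d*M.i, M.a*M.i - M.c*M.g, M.c*M.d - M.a*M.f,
   M.d*M.h - M.e*M.g, M.b*M.g - M.a*M.h, M.a*M.e - M.b*M.d⟩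

/-- transform: Q'(v) = Q(Mv); columns of M are images of basis vectors -/
def TF.tr (A : TF) (M : M3) : TF :=
  ⟨A.Q M.a M.d M.g, A.Q M.b M.e M.h, A.Q M.c M.f M.i,
   A.B M.a M.d M.g M.b M.e M.h, A.B M.a M.d M.g M.c M.f M.i, A.B M.b M.e M.h M.c M.f M.i⟩

lemma Q_tr (A : TF) (M : M3) (x y z : ℤ) :
    (A.tr M).Q x y z = A.Q (M.app1 x y z) (M.app2 x y z) (M.app3 x y z) := by
  simp only [TF.tr, TF.Q, TF.B, M3.app1, M3.app2, M3.app3]; ring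

lemma det_tr (A : TF) (M : M3) : (A.tr M).det = M.det^2 * A.det := by
  simp only [TF.tr, TF.det, TF.Q, TF.B, M3.det]; ring

lemma adj_app (M : M3) (x y z : ℤ) :
    M.app1 (M.adj.app1 x y z) (M.adj.app2 x y z) (M.adj.app3 x y z) = M.det * x ∧
    M.app2 (M.adj.app1 x y z) (M.adj.app2 x y z) (M.adj.app3 x y z) = M.det * y ∧
    M.app3 (M.adj.app1 x y z) (M.adj.app2 x y z) (M.adj.app3 x y z) = M.det * z := by
  refine ⟨?_, ?_, ?_⟩ <;> · simp only [M3.app1, M3.app2, M3.app3, M3.adj, M3.det]; ring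

lemma app_adj (M : M3) (x y z : ℤ) :
    M.adj.app1 (M.app1 x y z) (M.app2 x y z) (M.app3 x y z) = M.det * x ∧
    M.adj.app2 (M.app1 x y z) (M.app2 x y z) (M.app3 x y z) = M.det * y ∧
    M.adj.app3 (M.app1 x y z) (M.app2 x y z) (M.app3 x y z) = M.det * z := by
  refine ⟨?_, ?_, ?_⟩ <;> · simp only [M3.app1, M3.app2, M3.app3, M3.adj, M3.det]; ring

lemma values_tr (A : TF) (M : M3) (hM : M.det = 1) (t : ℤ) :
    (∃ x y z, (A.tr M).Q x y z = t) ↔ (∃ x y z, A.Q x y z = t) := by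
  constructor
  · rintro ⟨x, y, z, hv⟩
    exact ⟨_, _, _, (Q_tr A M x y z) ▸ hv⟩
  · rintro ⟨x, y, z, hv⟩
    refine ⟨M.adj.app1 x y z, M.adj.app2 x y z, M.adj.app3 x y z, ?_⟩
    rw [Q_tr]
    obtain ⟨h1, h2, h3⟩ := adj_app M x y z
    rw [h1, h2, h3, hM]; simpa using hv

lemma posdef_tr (A : TF) (M : M3) (hM : M.det = 1) (hA : A.PosDef) : (A.tr M).PosDef := by
  intro x y z hv
  rw [Q_tr]
  apply hA
  rintro ⟨h1, h2, h3⟩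
  obtain ⟨e1, e2, e3⟩ := app_adj M x y z
  rw [h1, h2, h3] at e1 e2 e3
  simp only [M3.app1, M3.app2, M3.app3, M3.adj, mul_zero, add_zero, hM, one_mul] at e1 e2 e3
  exact hv ⟨by omega, by omega, by omega⟩

def BV (p s r y z : ℤ) : ℤ := p*y^2 + s*y*z + r*z^2

lemma BV_tr (p s r a b c d y z : ℤ) :
    BV (TP p s r a c) (TS p s r a b c d) (TR p s r b d) y z
      = BV p s r (a*y+b*z) (c*y+d*z) := by
  simp only [BV, TP, TS, TR]; ring

def Good (A : TF) : Prop :=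
  (∀ t : ℤ, (∃ x y z, A.Q x y z = t) → ∃ a b c : ℤ, t = a^2 + b^2 + 3*c^2) ∨
  (∀ t : ℤ, (∃ x y z, A.Q x y z = t) → ∃ a b c : ℤ, t = a^2 + 2*b^2 + 2*b*c + 2*c^2)

lemma good_of_values {A A' : TF}
    (h : ∀ t, (∃ x y z, A.Q x y z = t) → (∃ x y z, A'.Q x y z = t)) :
    Good A' → Good A := by
  rintro (h1 | h2)
  · exact Or.inl fun t ht => h1 t (h t ht)
  · exact Or.inr fun t ht => h2 t (h t ht)

lemma good_base (A : TF) (hpd : A.PosDef) (hdet : A.det = 3) (ha : A.a = 1) : Good A := by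
  obtain ⟨b', c', f', hb', hc', hf'⟩ :
      ∃ b c f : ℤ, A.b - A.d^2 = b ∧ A.c - A.e^2 = c ∧ A.f - A.d*A.e = f := ⟨_,_,_,rfl,rfl,rfl⟩
  have hval : ∀ x y z : ℤ, A.Q x y z = (x + A.d*y + A.e*z)^2 + BV b' (2*f') c' y z := by
    intro x y z; simp only [TF.Q, BV, ← hb', ← hc', ← hf', ha]; ring
  have hbpos : 0 < b' := by
    have h1 := hpd (-A.d) 1 0 (by simp)
    have h2 : A.Q (-A.d) 1 0 = b' := by simp only [TF.Q, ← hb', ha]; ring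
    rwa [h2] at h1
  have hdisc2 : 4*b'*c' - (2*f')^2 = 12 := by
    have h13 : 4*b'*c' - (2*f')^2 = 4*A.det - 4*(A.a-1)*(A.b*A.c - A.f^2) := by
      simp only [← hb', ← hc', ← hf', TF.det, ha]; ring
    rw [h13, hdet, ha]; ring
  obtain ⟨a2, b2, c2, d2, det2, habs, hple⟩ :=
    binary_reduce b'.toNat b' (2*f') c' (le_refl _) hbpos (by rw [hdisc2]; norm_num)
  have hbv : ∀ y z : ℤ, BV b' (2*f') c' y z
      = BV (TP b' (2*f') c' a2 c2) (TS b' (2*f') c' a2 b2 c2 d2) (TR b' (2*f') c' b2 d2)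
          (d2*y - b2*z) (-c2*y + a2*z) := by
    intro y z
    rw [BV_tr]
    have e1 : a2*(d2*y - b2*z) + b2*(-c2*y + a2*z) = (a2*d2 - b2*c2)*y := by ring
    have e2 : c2*(d2*y - b2*z) + d2*(-c2*y + a2*z) = (a2*d2 - b2*c2)*z := by ring
    rw [e1, e2, det2]; ring_nf
  obtain ⟨P', S', R', hPd, hSd, hRd⟩ :
      ∃ P S R : ℤ, TP b' (2*f') c' a2 c2 = P ∧ TS b' (2*f') c' a2 b2 c2 d2 = S ∧
        TR b' (2*f') c' b2 d2 = R := ⟨_,_,_,rfl,rfl,rfl⟩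
  rw [hPd] at habs hple hbv
  rw [hSd] at habs hbv
  rw [hRd] at hple hbv
  have hdiscP : 4*P'*R' - S'^2 = 12 := by
    have h0 := disc_invariant b' (2*f') c' a2 b2 c2 d2
    rw [det2, hPd, hSd, hRd, hdisc2] at h0; linarith
  have key : 4*b'*P' = (2*b'*a2 + (2*f')*c2)^2 + (4*b'*c' - (2*f')^2)*c2^2 := by
    rw [← hPd]; simp only [TP]; ring
  rw [hdisc2] at key
  have hPpos : 0 < P' := by
    have h1 : 0 ≤ (2*b'*a2 + (2*f')*c2)^2 := sq_nonneg _
    have h2 : 0 ≤ 12*c2^2 := by positivity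
    rcases lt_trichotomy P' 0 with h | h | h
    · have h3 : 4*b'*P' < 0 := mul_neg_of_pos_of_neg (by linarith) h
      linarith
    · exfalso
      rw [h, mul_zero] at key
      have hc2sq : 12*c2^2 = 0 := by linarith
      have hc2 : c2 = 0 := by
        have : c2^2 = 0 := by linarith
        exact pow_eq_zero_iff (n := 2) (by norm_num) |>.mp this
      have h5 : (2*b'*a2 + (2*f')*c2)^2 = 0 := by linarith
      have h6 : 2*b'*a2 + (2*f')*c2 = 0 := pow_eq_zero_iff (n := 2) (by norm_num) |>.mp h5
      rw [hc2] at h6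
      have h7 : a2 = 0 := by
        have h8 : (2*b')*a2 = 0 := by linarith
        rcases mul_eq_zero.mp h8 with h9 | h9
        · exfalso; omega
        · exact h9
      rw [hc2, h7] at det2; simp at det2
    · exact h
  have hSsq : S'^2 ≤ P'*P' := by
    have h1 := mul_self_le_mul_self (abs_nonneg S') habs
    calc S'^2 = abs S' * abs S' := by rw [abs_mul_abs_self]; ring
      _ ≤ P'*P' := h1
  have hPP : P'*P' ≤ P'*R' := mul_le_mul_of_nonneg_left hple (le_of_lt hPpos)
  have hP4 : P'*P' ≤ 4 := by linarith
  have hP2 : P' ≤ 2 := by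
    by_contra hcon
    push_neg at hcon
    have h9 : (3:ℤ)*3 ≤ P'*P' := mul_le_mul hcon hcon (by norm_num) (by linarith)
    linarith
  have hSeven : (2:ℤ) ∣ S' := by
    have h4 : S'*S' = 4*(P'*R' - 3) := by have : S'^2 = S'*S' := sq S'; linarith
    rcases Int.even_or_odd S' with he | ho
    · exact he.two_dvd
    · exfalso; have hodd := ho.mul ho; rw [Int.odd_iff] at hodd; omega
  have habs' : -P' ≤ S' ∧ S' ≤ P' := abs_le.mp habs
  interval_cases P'
  · -- P' = 1 : S' = 0, R' = 3
    obtain ⟨hb1, hb2⟩ := abs_le.mp habs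
    have hS0 : S' = 0 := by omega
    rw [hS0] at hdiscP; norm_num at hdiscP
    have hR3 : R' = 3 := by omega
    left
    rintro t ⟨x, y, z, hxyz⟩
    rw [hval, hbv y z, hS0, hR3] at hxyz
    refine ⟨x + A.d*y + A.e*z, d2*y - b2*z, -c2*y + a2*z, ?_⟩
    simp only [BV] at hxyz; linear_combination -hxyz
  · -- P' = 2 : S' = ±2, R' = 2
    obtain ⟨hb1, hb2⟩ := abs_le.mp habs
    have hS2 : S' = 2 ∨ S' = -2 := by
      rcases hSeven with ⟨u, hu⟩
      by_contra hcon
      push_neg at hcon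
      have hS0 : S' = 0 := by omega
      rw [hS0] at hdiscP; norm_num at hdiscP; omega
    have hR2 : R' = 2 := by
      rcases hS2 with h2 | h2 <;> rw [h2] at hdiscP <;> norm_num at hdiscP <;> omega
    right
    rintro t ⟨x, y, z, hxyz⟩
    rw [hval, hbv y z, hR2] at hxyz
    simp only [BV] at hxyz
    rcases hS2 with h2 | h2
    · refine ⟨x + A.d*y + A.e*z, d2*y - b2*z, -c2*y + a2*z, ?_⟩
      rw [h2] at hxyz; linear_combination -hxyz
    · refine ⟨x + A.d*y + A.e*z, d2*y - b2*z, -(-c2*y + a2*z), ?_⟩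
      rw [h2] at hxyz; linear_combination -hxyz

lemma Q_one_zero_zero (A : TF) : A.Q 1 0 0 = A.a := by simp [TF.Q]

lemma good_classify : ∀ n : ℕ, ∀ A : TF, A.PosDef → A.det = 3 → A.a.toNat ≤ n → Good A := by
  intro n
  induction n using Nat.strong_induction_on with
  | _ n ih =>
    intro A hpd hdet han
    have hapos : 0 < A.a := by
      have h := hpd 1 0 0 (by simp)
      rwa [Q_one_zero_zero] at h
    by_cases ha1 : A.a = 1
    · exact good_base A hpd hdet ha1
    have hk2 : 2 ≤ A.a := by omega
    obtain ⟨hp, hs, hr, hhp, hhs, hhr⟩ :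
        ∃ p s r : ℤ, A.a*A.b - A.d^2 = p ∧ 2*(A.a*A.f - A.d*A.e) = s ∧ A.a*A.c - A.e^2 = r :=
      ⟨_,_,_,rfl,rfl,rfl⟩
    have hppos : 0 < hp := by
      have h1 := hpd (-A.d) A.a 0 (by push_neg; intro _ h2; omega)
      have h2 : A.Q (-A.d) A.a 0 = A.a * hp := by simp only [TF.Q, ← hhp]; ring
      rw [h2] at h1
      rcases mul_pos_iff.mp h1 with ⟨_, h3⟩ | ⟨h3, _⟩
      · exact h3
      · exfalso; omega
    have hdisc : 4*hp*hr - hs^2 = 12*A.a := by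
      have h0 : 4*hp*hr - hs^2 = 4*A.a*A.det := by
        simp only [← hhp, ← hhs, ← hhr, TF.det]; ring
      rw [h0, hdet]; ring
    obtain ⟨a2, b2, c2, d2, det2, habs, hple⟩ :=
      binary_reduce hp.toNat hp hs hr (le_refl _) hppos (by rw [hdisc]; positivity)
    obtain ⟨P', S', R', hPd, hSd, hRd⟩ :
        ∃ P S R : ℤ, TP hp hs hr a2 c2 = P ∧ TS hp hs hr a2 b2 c2 d2 = S ∧
          TR hp hs hr b2 d2 = R := ⟨_,_,_,rfl,rfl,rfl⟩
    rw [hPd] at habs hple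
    rw [hSd] at habs
    rw [hRd] at hple
    have hdiscP : 4*P'*R' - S'^2 = 12*A.a := by
      have h0 := disc_invariant hp hs hr a2 b2 c2 d2
      rw [det2, hPd, hSd, hRd, hdisc] at h0; linarith
    have key : 4*hp*P' = (2*hp*a2 + hs*c2)^2 + (12*A.a)*c2^2 := by
      rw [← hPd, ← hdisc]; simp only [TP]; ring
    have hPpos : 0 < P' := by
      have h1 : 0 ≤ (2*hp*a2 + hs*c2)^2 := sq_nonneg _
      have h2 : 0 ≤ (12*A.a)*c2^2 := by positivity
      rcases lt_trichotomy P' 0 with h | h | h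
      · have h3 : 4*hp*P' < 0 := mul_neg_of_pos_of_neg (by linarith) h
        linarith
      · exfalso
        rw [h, mul_zero] at key
        have hc2sq : (12*A.a)*c2^2 = 0 := by linarith
        have hc2 : c2 = 0 := by
          have h4 : c2^2 = 0 := by
            rcases mul_eq_zero.mp hc2sq with h5 | h5
            · exfalso; omega
            · exact h5
          exact pow_eq_zero_iff (n := 2) (by norm_num) |>.mp h4
        have h5 : (2*hp*a2 + hs*c2)^2 = 0 := by linarith
        have h6 : 2*hp*a2 + hs*c2 = 0 := pow_eq_zero_iff (n := 2) (by norm_num) |>.mp h5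
        rw [hc2] at h6
        have h7 : a2 = 0 := by
          have h8 : (2*hp)*a2 = 0 := by linarith
          rcases mul_eq_zero.mp h8 with h9 | h9
          · exfalso; omega
          · exact h9
        rw [hc2, h7] at det2; simp at det2
      · exact h
    have hSsq : S'^2 ≤ P'*P' := by
      have h1 := mul_self_le_mul_self (abs_nonneg S') habs
      calc S'^2 = abs S' * abs S' := by rw [abs_mul_abs_self]; ring
        _ ≤ P'*P' := h1
    have hPP : P'*P' ≤ P'*R' := mul_le_mul_of_nonneg_left hple (le_of_lt hPpos)
    have hP4 : P'*P' ≤ 4*A.a := by linarith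
    have hPk : P' ≤ A.a := by
      by_contra hcon
      push_neg at hcon
      have h9 : (A.a+1)*(A.a+1) ≤ P'*P' :=
        mul_le_mul (by omega) (by omega) (by omega) (by omega)
      have h10 : 2*A.a ≤ A.a*A.a := by
        have := mul_le_mul_of_nonneg_right hk2 (le_of_lt hapos)
        linarith
      nlinarith
    -- centered residue of s₀ = A.d*a2 + A.e*c2 mod A.a
    obtain ⟨x₀, ρ, hxρ, hρ1, hρ2⟩ :
        ∃ x₀ ρ : ℤ, A.a*x₀ + (A.d*a2 + A.e*c2) = ρ ∧ -A.a ≤ 2*ρ ∧ 2*ρ ≤ A.a := by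
      obtain ⟨s₀, hs₀⟩ : ∃ s₀ : ℤ, A.d*a2 + A.e*c2 = s₀ := ⟨_, rfl⟩
      have hdm := Int.mul_ediv_add_emod s₀ A.a
      have h1 : 0 ≤ s₀ % A.a := Int.emod_nonneg _ (by omega)
      have h2 : s₀ % A.a < A.a := Int.emod_lt_of_pos _ hapos
      by_cases hc : 2*(s₀ % A.a) ≤ A.a
      · exact ⟨-(s₀/A.a), s₀ % A.a, by rw [hs₀]; linear_combination -hdm, by omega, by omega⟩
      · exact ⟨-(s₀/A.a) - 1, s₀ % A.a - A.a, by rw [hs₀]; linear_combination -hdm,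
          by omega, by omega⟩
    obtain ⟨k', hk'⟩ : ∃ k', A.Q x₀ a2 c2 = k' := ⟨_, rfl⟩
    have hkey2 : A.a * k' = ρ^2 + P' := by
      rw [← hk', ← hPd]
      have e0 : A.a*x₀ + A.d*a2 + A.e*c2 = ρ := by linarith
      calc A.a * A.Q x₀ a2 c2
          = (A.a*x₀ + A.d*a2 + A.e*c2)^2 + (hp*a2^2 + hs*a2*c2 + hr*c2^2) := by
            simp only [TF.Q, ← hhp, ← hhs, ← hhr]; ring
        _ = ρ^2 + TP hp hs hr a2 c2 := by rw [e0]; simp only [TP]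
    have hac : ¬(x₀ = 0 ∧ a2 = 0 ∧ c2 = 0) := by
      rintro ⟨_, h1, h2⟩; rw [h1, h2] at det2; simp at det2
    have hk'pos : 0 < k' := hk' ▸ hpd x₀ a2 c2 hac
    have hρsq : 4*(ρ*ρ) ≤ A.a*A.a := by
      have h1 := mul_self_le_mul_self (abs_nonneg (2*ρ)) (abs_le.mpr ⟨hρ1, hρ2⟩)
      rw [abs_mul_abs_self] at h1
      linarith
    have hlt : k' < A.a := by
      by_contra hcon
      push_neg at hcon
      have h1 : A.a*A.a ≤ A.a*k' := mul_le_mul_of_nonneg_left hcon (le_of_lt hapos)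
      have e : ρ^2 = ρ*ρ := sq ρ
      have h10 : 2*A.a ≤ A.a*A.a := by
        have := mul_le_mul_of_nonneg_right hk2 (le_of_lt hapos)
        linarith
      linarith
    have hUdet : (⟨x₀, 0, 1, a2, b2, 0, c2, d2, 0⟩ : M3).det = 1 := by
      have h0 : (⟨x₀, 0, 1, a2, b2, 0, c2, d2, 0⟩ : M3).det = a2*d2 - b2*c2 := by
        simp only [M3.det]; ring
      rw [h0, det2]
    have hA'pd := posdef_tr A _ hUdet hpd
    have hA'det : (A.tr ⟨x₀, 0, 1, a2, b2, 0, c2, d2, 0⟩).det = 3 := by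
      rw [det_tr, hUdet, hdet]; ring
    have hA'a : (A.tr ⟨x₀, 0, 1, a2, b2, 0, c2, d2, 0⟩).a = k' := by
      rw [← hk']; rfl
    have hGood' : Good (A.tr ⟨x₀, 0, 1, a2, b2, 0, c2, d2, 0⟩) :=
      ih k'.toNat (by omega) _ hA'pd hA'det (by rw [hA'a])
    exact good_of_values (fun t ht => (values_tr A _ hUdet t).mpr ht) hGood'

theorem classify (A : TF) (hpd : A.PosDef) (hdet : A.det = 3) : Good A :=
  good_classify A.a.toNat A hpd hdet (le_refl _)

theorem key_rep (n : ℕ) : ∃ a b c : ℤ, 24*(n:ℤ) + 7 = a^2 + b^2 + 3*c^2 := by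
  obtain ⟨m, hm⟩ : ∃ m : ℕ, 24*n + 7 = m := ⟨_, rfl⟩
  have hm24 : m % 24 = 7 := by omega
  have hco : Nat.Coprime 24 m := by
    show Nat.gcd 24 m = 1
    rw [Nat.gcd_rec, hm24]
    decide
  obtain ⟨k, hk1, hk2⟩ := Nat.chineseRemainder hco 13 (8*n+2)
  haveI : NeZero (24*m) := ⟨by omega⟩
  haveI : NeZero m := ⟨by omega⟩
  have hkunit : IsUnit (k : ZMod (24*m)) := by
    rw [ZMod.isUnit_iff_coprime]
    apply Nat.Coprime.mul_right
    · have hk24 : k % 24 = 13 := by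
        have h0 : k % 24 = 13 % 24 := hk1
        omega
      show Nat.gcd k 24 = 1
      rw [Nat.gcd_comm, Nat.gcd_rec, hk24]
      decide
    · have hdvd : m ∣ 3*k + 1 := by
        have h2 : 3*k + 1 ≡ 3*(8*n+2) + 1 [MOD m] := (hk2.mul_left 3).add_right 1
        have h3 : 3*(8*n+2) + 1 = m := by omega
        rw [h3] at h2
        have h4 : (3*k+1) % m = m % m := h2
        rw [Nat.mod_self] at h4
        exact Nat.dvd_of_mod_eq_zero h4
      have g1 : Nat.gcd k m ∣ 3*k+1 := (Nat.gcd_dvd_right k m).trans hdvd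
      have g2 : Nat.gcd k m ∣ 3*k := Dvd.dvd.mul_left (Nat.gcd_dvd_left k m) 3
      have g3 := Nat.dvd_sub g1 g2
      simpa using g3
  obtain ⟨P, hPgt, hPp, hPmod⟩ :=
    Nat.forall_exists_prime_gt_and_eq_mod (q := 24*m) hkunit (24*m + 3)
  haveI : Fact (Nat.Prime P) := ⟨hPp⟩
  -- congruence mod 24
  have hcast24 : (P : ZMod 24) = ((13:ℕ) : ZMod 24) := by
    have h1 := congrArg (ZMod.castHom (show (24:ℕ) ∣ 24*m from ⟨m, rfl⟩) (ZMod 24)) hPmod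
    simp only [map_natCast] at h1
    rw [h1]
    exact (ZMod.natCast_eq_natCast_iff _ _ _).mpr hk1
  have hP24 : P % 24 = 13 := by
    have h4 : P ≡ 13 [MOD 24] := (ZMod.natCast_eq_natCast_iff _ _ _).mp hcast24
    have h5 : P % 24 = 13 % 24 := h4
    omega
  -- congruence mod m
  have hcastm : (P : ZMod m) = ((8*n+2 : ℕ) : ZMod m) := by
    have h1 := congrArg (ZMod.castHom (show m ∣ 24*m from ⟨24, by ring⟩) (ZMod m)) hPmod
    simp only [map_natCast] at h1
    rw [h1]
    exact (ZMod.natCast_eq_natCast_iff _ _ _).mpr hk2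
  have hPodd : Odd P := by rw [Nat.odd_iff]; omega
  have hmodd : Odd m := by rw [Nat.odd_iff]; omega
  have hm4 : m % 4 = 3 := by omega
  have hP4 : P % 4 = 1 := by omega
  have hP3 : P % 3 = 1 := by omega
  -- Jacobi symbol computations
  have hJ3P : jacobiSym ((3:ℕ):ℤ) P = 1 := by
    have h1 := jacobiSym.quadratic_reciprocity_one_mod_four' (a := 3) (b := P)
      (by decide) hP4
    rw [h1, jacobiSym.mod_left]
    have h2 : ((P:ℤ)) % ((3:ℕ):ℤ) = 1 := by
      push_cast
      omega
    rw [h2, jacobiSym.one_left]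
  have hJm3 : jacobiSym (-3) m = 1 := by
    have e1 : jacobiSym (-3) m = jacobiSym (-1) m * jacobiSym ((3:ℕ):ℤ) m := by
      rw [← jacobiSym.mul_left]; norm_num
    have e2 : jacobiSym (-1) m = -1 := by
      rw [jacobiSym.at_neg_one hmodd, ZMod.χ₄_nat_three_mod_four hm4]
    have e3 : jacobiSym ((3:ℕ):ℤ) m = -1 := by
      rw [jacobiSym.quadratic_reciprocity_three_mod_four (by decide) hm4]
      rw [jacobiSym.mod_left]
      have h2 : ((m:ℤ)) % ((3:ℕ):ℤ) = 1 := by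
        push_cast
        omega
      rw [h2, jacobiSym.one_left]
    rw [e1, e2, e3]; norm_num
  have hJ82 : jacobiSym (8*(n:ℤ)+2) m = 1 := by
    have h3 : jacobiSym (-3) m * jacobiSym (8*(n:ℤ)+2) m = 1 := by
      rw [← jacobiSym.mul_left]
      have h4 : (-3) * (8*(n:ℤ)+2) = 1 - m := by
        have : (m:ℤ) = 24*(n:ℤ) + 7 := by exact_mod_cast congrArg (Nat.cast : ℕ → ℤ) hm |>.symm
        rw [this]; ring
      rw [h4]
      have h5 : jacobiSym (1 - (m:ℤ)) m = jacobiSym 1 m := by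
        apply jacobiSym.mod_left'
        have h6 : (1 - (m:ℤ)) = 1 + (m:ℤ)*(-1) := by ring
        rw [h6, Int.add_mul_emod_self_left]
      rw [h5, jacobiSym.one_left]
    rw [hJm3, one_mul] at h3
    exact h3
  have hJmP : jacobiSym m P = 1 := by
    have h1 : jacobiSym m P = jacobiSym P m :=
      jacobiSym.quadratic_reciprocity_one_mod_four' hmodd hP4
    have h2 : jacobiSym (P:ℤ) m = jacobiSym (8*(n:ℤ)+2) m := by
      apply jacobiSym.mod_left'
      have h7 : P ≡ 8*n+2 [MOD m] := (ZMod.natCast_eq_natCast_iff _ _ _).mp hcastm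
      have h8 : P % m = (8*n+2) % m := h7
      have h9 : ((P:ℤ)) % (m:ℤ) = ((P % m : ℕ) : ℤ) := by
        push_cast; ring
      have h10 : ((8*(n:ℤ)+2)) % (m:ℤ) = (((8*n+2) % m : ℕ) : ℤ) := by
        push_cast; ring
      rw [h9, h10, h8]
    rw [h1, h2, hJ82]
  have hJfull : jacobiSym (-3 * (m:ℤ)) P = 1 := by
    have e0 : (-3 : ℤ) * m = (-1) * (((3:ℕ):ℤ) * m) := by push_cast; ring
    rw [e0, jacobiSym.mul_left, jacobiSym.mul_left]
    rw [jacobiSym.at_neg_one hPodd, ZMod.χ₄_nat_one_mod_four hP4, hJ3P, hJmP]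
    norm_num
  -- get square root of -3m mod P
  have hne : ((-3 * (m:ℤ) : ℤ) : ZMod P) ≠ 0 := by
    rw [Ne, ZMod.intCast_zmod_eq_zero_iff_dvd]
    intro hdvd
    rw [show (-3 * (m:ℤ)) = -(3*m) from by ring, dvd_neg] at hdvd
    have h1 : (P:ℤ) ∣ ((3*m : ℕ) : ℤ) := by push_cast; exact_mod_cast hdvd
    have h2 : P ∣ 3*m := Int.ofNat_dvd.mp h1
    have h3 := Nat.le_of_dvd (by omega) h2
    omega
  have hsq : IsSquare ((-3 * (m:ℤ) : ℤ) : ZMod P) := by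
    apply (legendreSym.eq_one_iff P hne).mp
    rw [jacobiSym.legendreSym.to_jacobiSym]
    exact hJfull
  obtain ⟨x₁, hx₁⟩ := hsq
  have hmne : ((m:ℕ) : ZMod P) ≠ 0 := by
    rw [Ne, ZMod.natCast_eq_zero_iff]
    intro hdvd
    have := Nat.le_of_dvd (by omega) hdvd
    omega
  have hx' : x₁^2 = (-3 : ZMod P) * ((m:ℕ) : ZMod P) := by
    rw [sq, ← hx₁]
    push_cast
    ring
  obtain ⟨u, hu⟩ : ∃ u : ZMod P, ((m:ℕ) : ZMod P) * u^2 = -3 := by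
    refine ⟨x₁ * ((m:ℕ) : ZMod P)⁻¹, ?_⟩
    rw [mul_pow, hx']
    field_simp
  obtain ⟨q, hq⟩ : ∃ q : ℤ, ((q : ZMod P) = u) := ⟨(u.val : ℤ), by push_cast; exact ZMod.natCast_rightInverse u⟩
  have hPdvd : (P:ℤ) ∣ ((m:ℤ)*q^2 + 3) := by
    rw [← ZMod.intCast_zmod_eq_zero_iff_dvd]
    push_cast
    rw [hq, hu]
    ring
  -- build the form
  obtain ⟨N, hN⟩ : ∃ N : ℤ, 3 + (m:ℤ)*q^2 + 9*P = N := ⟨_, rfl⟩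
  have hPN : (P:ℤ) ∣ N := by
    rw [← hN]
    have : (3 : ℤ) + (m:ℤ)*q^2 + 9*P = ((m:ℤ)*q^2 + 3) + P*9 := by ring
    rw [this]
    exact dvd_add hPdvd ⟨9, rfl⟩
  have hmN : (m:ℤ) ∣ N := by
    rw [← hN, ← ZMod.intCast_zmod_eq_zero_iff_dvd]
    push_cast
    rw [ZMod.natCast_self]
    rw [show ((P:ℕ) : ZMod m) = ((8*n+2 : ℕ) : ZMod m) from hcastm]
    push_cast
    have h72 : ((72*n + 21 : ℕ) : ZMod m) = 0 := by
      have h73 : (72*n + 21 : ℕ) = 3*m := by omega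
      rw [h73]
      push_cast
      rw [ZMod.natCast_self]
      ring
    push_cast at h72
    linear_combination h72
  have hcop : IsCoprime (m:ℤ) (P:ℤ) := by
    rw [Int.isCoprime_iff_gcd_eq_one, Int.gcd_natCast_natCast]
    have hndvd : ¬ P ∣ m := by
      intro h
      have h1 : P ≤ m := Nat.le_of_dvd (by omega) h
      omega
    exact Nat.Coprime.symm ((Nat.Prime.coprime_iff_not_dvd hPp).mpr hndvd)
  obtain ⟨r, hr⟩ := hcop.mul_dvd hmN hPN
  have hmPr : (m:ℤ)*P*r = 3 + (m:ℤ)*q^2 + 9*P := by rw [← hr, hN]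
  have hm0' : (0:ℤ) < m := by exact_mod_cast Nat.pos_of_ne_zero (by omega)
  have hP0' : (0:ℤ) < P := by exact_mod_cast hPp.pos
  -- the ternary form A
  have hApd : TF.PosDef ⟨(m:ℤ), (P:ℤ), r, 0, 3, q⟩ := by
    intro x y z hxyz
    have hiden : (m:ℤ)*P * (TF.Q ⟨(m:ℤ), (P:ℤ), r, 0, 3, q⟩ x y z)
        = P*((m:ℤ)*x + 3*z)^2 + m*((P:ℤ)*y + q*z)^2 + 3*z^2 := by
      simp only [TF.Q]
      linear_combination (z^2) * hmPr
    by_contra hQ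
    push_neg at hQ
    have h0 : (0:ℤ) < (m:ℤ)*P := mul_pos hm0' hP0'
    have hmPQ : (m:ℤ)*P * (TF.Q ⟨(m:ℤ), (P:ℤ), r, 0, 3, q⟩ x y z) ≤ 0 := by
      calc (m:ℤ)*P * (TF.Q ⟨(m:ℤ), (P:ℤ), r, 0, 3, q⟩ x y z) ≤ (m:ℤ)*P * 0 :=
            mul_le_mul_of_nonneg_left hQ h0.le
        _ = 0 := by ring
    have t1 : 0 ≤ (P:ℤ)*((m:ℤ)*x + 3*z)^2 := by positivity
    have t2 : 0 ≤ (m:ℤ)*((P:ℤ)*y + q*z)^2 := by positivity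
    have t3 : 0 ≤ 3*z^2 := by positivity
    have hz : z = 0 := by
      have h1 : 3*z^2 = 0 := by linarith
      have h2 : z^2 = 0 := by linarith
      exact pow_eq_zero_iff (n := 2) (by norm_num) |>.mp h2
    have hsq2 : (m:ℤ)*((P:ℤ)*y + q*z)^2 = 0 := by
      have h1 : 3*z^2 = 0 := by rw [hz]; ring
      linarith
    have hy : y = 0 := by
      have h4 : ((P:ℤ)*y + q*z)^2 = 0 := by
        rcases mul_eq_zero.mp hsq2 with h | h
        · exfalso; linarith
        · exact h
      have h5 := pow_eq_zero_iff (n := 2) (M₀ := ℤ) (by norm_num) |>.mp h4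
      rw [hz] at h5
      have h6 : (P:ℤ)*y = 0 := by linear_combination h5
      rcases mul_eq_zero.mp h6 with h | h
      · exfalso; linarith
      · exact h
    have hx : x = 0 := by
      have h1 : 3*z^2 = 0 := by rw [hz]; ring
      have hsq1 : (P:ℤ)*((m:ℤ)*x + 3*z)^2 = 0 := by linarith
      have h4 : ((m:ℤ)*x + 3*z)^2 = 0 := by
        rcases mul_eq_zero.mp hsq1 with h | h
        · exfalso; linarith
        · exact h
      have h5 := pow_eq_zero_iff (n := 2) (M₀ := ℤ) (by norm_num) |>.mp h4
      rw [hz] at h5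
      have h6 : (m:ℤ)*x = 0 := by linear_combination h5
      rcases mul_eq_zero.mp h6 with h | h
      · exfalso; linarith
      · exact h
    exact hxyz ⟨hx, hy, hz⟩
  have hAdet : TF.det ⟨(m:ℤ), (P:ℤ), r, 0, 3, q⟩ = 3 := by
    simp only [TF.det]
    linear_combination hmPr
  have hGood := classify _ hApd hAdet
  rcases hGood with hG | hG
  · obtain ⟨a, b, c, habc⟩ := hG (m:ℤ) ⟨1, 0, 0, by simp [TF.Q]⟩
    refine ⟨a, b, c, ?_⟩
    have hmz : (m:ℤ) = 24*(n:ℤ)+7 := by exact_mod_cast congrArg (Nat.cast : ℕ → ℤ) hm |>.symm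
    rw [← hmz]
    exact habc
  · exfalso
    obtain ⟨a, b, c, habc⟩ := hG (P:ℤ) ⟨0, 1, 0, by simp [TF.Q]⟩
    have hforms : ∀ x y z : ZMod 8, x^2 + 2*y^2 + 2*y*z + 2*z^2 ≠ 5 := by decide
    apply hforms (a : ZMod 8) (b : ZMod 8) (c : ZMod 8)
    have hcast := congrArg (fun t : ℤ => ((t : ZMod 8))) habc
    push_cast at hcast
    rw [← hcast]
    have hP8 : P % 8 = 5 := by omega
    have := ZMod.natCast_mod P 8
    rw [hP8] at this
    rw [← this]
    decide

lemma mod8_abc : ∀ a b c : ZMod 8, a^2 + b^2 + 3*c^2 = 7 → 4*a = 0 ∧ 4*b = 0 ∧ 4*c = 4 := by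
  decide

lemma mod8_uvw : ∀ u v w : ZMod 8, 3*u^2 + 2*v^2 + 2*w^2 = 7 → 4*u = 4 ∧ 4*v = 4 ∧ 4*w = 4 := by
  decide

lemma mod3_uvw : ∀ u v w : ZMod 3, 3*u^2 + 2*v^2 + 2*w^2 = 1 → v ≠ 0 ∧ w ≠ 0 := by
  decide

lemma even_of_mod8 (a : ℤ) (h : (4:ZMod 8)*(a : ZMod 8) = 0) : (2:ℤ) ∣ a := by
  have h1 : ((4*a : ℤ) : ZMod 8) = 0 := by push_cast; exact h
  rw [ZMod.intCast_zmod_eq_zero_iff_dvd] at h1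
  omega

lemma odd_of_mod8 (a : ℤ) (h : (4:ZMod 8)*(a : ZMod 8) = 4) : a % 2 = 1 := by
  have h1 : ((4*a - 4 : ℤ) : ZMod 8) = 0 := by push_cast; rw [h]; ring
  rw [ZMod.intCast_zmod_eq_zero_iff_dvd] at h1
  omega

lemma notdvd3 (a : ℤ) (h : (a : ZMod 3) ≠ 0) : ¬ (3:ℤ) ∣ a := by
  intro hdvd
  exact h ((ZMod.intCast_zmod_eq_zero_iff_dvd a 3).mpr (by exact_mod_cast hdvd))

lemma sq_form4 (u : ℤ) (hu : u % 2 = 1) : ∃ x : ℤ, u^2 = (4*x+1)^2 := by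
  have h4 : u % 4 = 1 ∨ u % 4 = 3 := by omega
  have hdm := Int.mul_ediv_add_emod u 4
  rcases h4 with h | h
  · refine ⟨u / 4, ?_⟩
    have h1 : u = 4*(u/4) + 1 := by omega
    conv_lhs => rw [h1]
  · refine ⟨-(u/4) - 1, ?_⟩
    have h1 : u = 4*(u/4) + 3 := by omega
    conv_lhs => rw [h1]
    ring
lemma sq_form6 (v : ℤ) (hv : v % 2 = 1) (h3 : ¬ (3:ℤ) ∣ v) : ∃ y : ℤ, v^2 = (6*y+1)^2 := by
  have h3' : v % 3 = 1 ∨ v % 3 = 2 := by omega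
  have h6 : v % 6 = 1 ∨ v % 6 = 5 := by omega
  have hdm := Int.mul_ediv_add_emod v 6
  rcases h6 with h | h
  · refine ⟨v / 6, ?_⟩
    have h1 : v = 6*(v/6) + 1 := by omega
    conv_lhs => rw [h1]
  · refine ⟨-(v/6) - 1, ?_⟩
    have h1 : v = 6*(v/6) + 5 := by omega
    conv_lhs => rw [h1]
    ring

theorem main_result (n : ℕ) : ∃ x y z : ℤ, (n : ℤ) = x*(2*x+1) + y*(3*y+1) + z*(3*z+1) := by
  obtain ⟨a, b, c, habc⟩ := key_rep n
  -- reduce mod 8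
  have hc8 : ((24*(n:ℤ)+7 : ℤ) : ZMod 8) = (a:ZMod 8)^2 + (b:ZMod 8)^2 + 3*(c:ZMod 8)^2 := by
    rw [habc]; push_cast; ring
  have hlhs8 : ((24*(n:ℤ)+7 : ℤ) : ZMod 8) = 7 := by
    have h1 : ((24*(n:ℤ)+7 - 7 : ℤ) : ZMod 8) = 0 :=
      (ZMod.intCast_zmod_eq_zero_iff_dvd _ 8).mpr ⟨3*n, by ring⟩
    push_cast at h1 ⊢
    linear_combination h1
  obtain ⟨ha4, hb4, hc4⟩ := mod8_abc _ _ _ (by rw [← hc8, hlhs8])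
  obtain ⟨a', ha'⟩ := even_of_mod8 a ha4
  obtain ⟨b', hb'⟩ := even_of_mod8 b hb4
  -- u v w
  have huvw : 24*(n:ℤ)+7 = 3*c^2 + 2*(a'+b')^2 + 2*(a'-b')^2 := by
    rw [habc, ha', hb']; ring
  have hlhs3 : ((24*(n:ℤ)+7 : ℤ) : ZMod 3) = 1 := by
    have h1 : ((24*(n:ℤ)+7 - 1 : ℤ) : ZMod 3) = 0 :=
      (ZMod.intCast_zmod_eq_zero_iff_dvd _ 3).mpr ⟨8*n+2, by ring⟩
    push_cast at h1 ⊢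
    linear_combination h1
  have hc3 : ((24*(n:ℤ)+7 : ℤ) : ZMod 3)
      = 3*((c:ZMod 3))^2 + 2*((a'+b' : ℤ):ZMod 3)^2 + 2*((a'-b' : ℤ):ZMod 3)^2 := by
    rw [huvw]; push_cast; ring
  obtain ⟨hv3, hw3⟩ := mod3_uvw (c : ZMod 3) ((a'+b' : ℤ):ZMod 3) ((a'-b' : ℤ):ZMod 3)
    (by rw [← hc3, hlhs3])
  -- mod 8 for u v w
  have hc8' : ((24*(n:ℤ)+7 : ℤ) : ZMod 8)
      = 3*((c:ZMod 8))^2 + 2*((a'+b' : ℤ):ZMod 8)^2 + 2*((a'-b' : ℤ):ZMod 8)^2 := by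
    rw [huvw]; push_cast; ring
  obtain ⟨hu8, hv8, hw8⟩ := mod8_uvw (c : ZMod 8) ((a'+b' : ℤ):ZMod 8) ((a'-b' : ℤ):ZMod 8)
    (by rw [← hc8', hlhs8])
  -- parities
  have hcodd : c % 2 = 1 := odd_of_mod8 c hu8
  have hvodd : (a'+b') % 2 = 1 := odd_of_mod8 _ hv8
  have hwodd : (a'-b') % 2 = 1 := odd_of_mod8 _ hw8
  have hv3' : ¬ (3:ℤ) ∣ (a'+b') := notdvd3 _ hv3
  have hw3' : ¬ (3:ℤ) ∣ (a'-b') := notdvd3 _ hw3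
  obtain ⟨x, hx2⟩ := sq_form4 c hcodd
  obtain ⟨y, hy2⟩ := sq_form6 (a'+b') hvodd hv3'
  obtain ⟨z, hz2⟩ := sq_form6 (a'-b') hwodd hw3'
  refine ⟨x, y, z, ?_⟩
  rw [hx2, hy2, hz2] at huvw
  have h24 : (24:ℤ)*(n:ℤ) = 24*(x*(2*x+1) + y*(3*y+1) + z*(3*z+1)) := by
    linear_combination huvw
  linarith

end Stmt8

theorem stmt_8 (n : ℕ) : ∃ x y z : ℤ, (n : ℤ) = x*(2*x+1) + y*(3*y+1) + z*(3*z+1) := by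
  exact Stmt8.main_result n
end

section
/- Every nonnegative integer n can be written as x(2x+1) + y(3y+1) + z(7z+1) with x, y, z integers if and only if for every nonnegative integer n there exist integers x, y, z with 168n + 41 = 21x² + 14y² + 6z². -/
theorem stmt_10 :
    (∀ n : ℕ, ∃ x y z : ℤ, (n : ℤ) = x*(2*x+1) + y*(3*y+1) + z*(7*z+1)) ↔
    (∀ n : ℕ, ∃ x y z : ℤ, 168*(n : ℤ) + 41 = 21*x^2 + 14*y^2 + 6*z^2) := by
  constructor
  · intro H n
    obtain ⟨x, y, z, h⟩ := H n
    exact ⟨4*x+1, 6*y+1, 14*z+1, by linear_combination 168*h⟩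
  · intro H n
    obtain ⟨x, y, z, h⟩ := H n
    -- decompose squares into multiples of 8/12/28 plus residue squares
    obtain ⟨p, hp⟩ : ∃ p, x^2 = 8*p + (x % 4)^2 :=
      ⟨2*(x/4)^2 + (x/4)*(x%4), by
        have h4 : x = 4*(x/4) + x%4 := by omega
        linear_combination (x + 4*(x/4) + x%4) * h4⟩
    obtain ⟨q, hq⟩ : ∃ q, y^2 = 12*q + (y % 6)^2 :=
      ⟨3*(y/6)^2 + (y/6)*(y%6), by
        have h4 : y = 6*(y/6) + y%6 := by omega
        linear_combination (y + 6*(y/6) + y%6) * h4⟩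
    obtain ⟨u, hu⟩ : ∃ u, z^2 = 28*u + (z % 14)^2 :=
      ⟨7*(z/14)^2 + (z/14)*(z%14), by
        have h4 : z = 14*(z/14) + z%14 := by omega
        linear_combination (z + 14*(z/14) + z%14) * h4⟩
    have h' : 168*(n:ℤ) + 41 = 168*(p+q+u) + 21*(x%4)^2 + 14*(y%6)^2 + 6*(z%14)^2 := by
      rw [hp, hq, hu] at h; linarith
    have hres : (x % 4 = 1 ∨ x % 4 = 3) ∧ (y % 6 = 1 ∨ y % 6 = 5) ∧
        (z % 14 = 1 ∨ z % 14 = 13) := by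
      have hx : 0 ≤ x % 4 ∧ x % 4 < 4 := ⟨Int.emod_nonneg _ (by norm_num), Int.emod_lt_of_pos _ (by norm_num)⟩
      have hy : 0 ≤ y % 6 ∧ y % 6 < 6 := ⟨Int.emod_nonneg _ (by norm_num), Int.emod_lt_of_pos _ (by norm_num)⟩
      have hz : 0 ≤ z % 14 ∧ z % 14 < 14 := ⟨Int.emod_nonneg _ (by norm_num), Int.emod_lt_of_pos _ (by norm_num)⟩
      set r1 := x % 4 with hr1
      set r2 := y % 6 with hr2
      set r3 := z % 14 with hr3
      clear_value r1 r2 r3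
      obtain ⟨hx1, hx2⟩ := hx; obtain ⟨hy1, hy2⟩ := hy; obtain ⟨hz1, hz2⟩ := hz
      interval_cases r1 <;> interval_cases r2 <;> interval_cases r3 <;> omega
    obtain ⟨hrx, hry, hrz⟩ := hres
    -- produce shifted witnesses
    obtain ⟨X, hX⟩ : ∃ X : ℤ, 21*x^2 = 168*(2*X^2+X) + 21 := by
      rcases hrx with h1 | h1
      · refine ⟨x/4, ?_⟩
        have h4 : x = 4*(x/4) + 1 := by omega
        linear_combination (21*x + 84*(x/4) + 21) * h4
      · refine ⟨-(x/4)-1, ?_⟩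
        have h4 : x = 4*(x/4) + 3 := by omega
        linear_combination (21*x + 84*(x/4) + 63) * h4
    obtain ⟨Y, hY⟩ : ∃ Y : ℤ, 14*y^2 = 168*(3*Y^2+Y) + 14 := by
      rcases hry with h1 | h1
      · refine ⟨y/6, ?_⟩
        have h4 : y = 6*(y/6) + 1 := by omega
        linear_combination (14*y + 84*(y/6) + 14) * h4
      · refine ⟨-(y/6)-1, ?_⟩
        have h4 : y = 6*(y/6) + 5 := by omega
        linear_combination (14*y + 84*(y/6) + 70) * h4
    obtain ⟨Z, hZ⟩ : ∃ Z : ℤ, 6*z^2 = 168*(7*Z^2+Z) + 6 := by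
      rcases hrz with h1 | h1
      · refine ⟨z/14, ?_⟩
        have h4 : z = 14*(z/14) + 1 := by omega
        linear_combination (6*z + 84*(z/14) + 6) * h4
      · refine ⟨-(z/14)-1, ?_⟩
        have h4 : z = 14*(z/14) + 13 := by omega
        linear_combination (6*z + 84*(z/14) + 78) * h4
    refine ⟨X, Y, Z, ?_⟩
    have hfin : 168*(n:ℤ) + 41 = 168*(2*X^2+X) + 168*(3*Y^2+Y) + 168*(7*Z^2+Z) + 41 := by
      rw [h]; linarith
    linarith [hfin]
end

section
/- Let u and v be integers such that u² + v² is a positive multiple of 5. Then there exist integers x and y with u² + v² = x² + y² and 5 does not divide xy. -/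
private lemma prime5 : Prime (5:ℤ) := by norm_num

private lemma brah (p q : ℤ) (h : ¬ (5 ∣ p) ∨ ¬ (5 ∣ q)) :
    ∃ x y : ℤ, 25*(p^2+q^2) = x^2+y^2 ∧ ¬ (5 ∣ x*y) := by
  by_cases h1 : (5:ℤ) ∣ p - 2*q
  · refine ⟨3*p - 4*q, 4*p + 3*q, by ring, ?_⟩
    intro hd
    rcases (prime5.dvd_mul).mp hd with h2 | h2 <;> omega
  · refine ⟨3*p + 4*q, 4*p - 3*q, by ring, ?_⟩
    intro hd
    rcases (prime5.dvd_mul).mp hd with h2 | h2 <;> omega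

theorem stmt_11 (u v : ℤ) (hpos : 0 < u^2 + v^2) (hdvd : 5 ∣ u^2 + v^2) :
    ∃ x y : ℤ, u^2 + v^2 = x^2 + y^2 ∧ ¬ (5 ∣ x*y) := by
  suffices H : ∀ n : ℕ, ∀ u v : ℤ, u^2 + v^2 = n → 5 ∣ u^2 + v^2 → 0 < u^2 + v^2 →
      ∃ x y : ℤ, u^2 + v^2 = x^2 + y^2 ∧ ¬ (5 ∣ x*y) by
    exact H (u^2+v^2).toNat u v (by omega) hdvd hpos
  intro n
  induction n using Nat.strong_induction_on with
  | _ n IH =>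
    intro u v hn hdvd hpos
    by_cases h5u : (5:ℤ) ∣ u
    · have h5v : (5:ℤ) ∣ v := by
        have : (5:ℤ) ∣ v^2 := by
          have : (5:ℤ) ∣ u^2 := Dvd.dvd.pow h5u (by norm_num)
          omega
        exact prime5.dvd_of_dvd_pow this
      obtain ⟨a, rfl⟩ := h5u
      obtain ⟨b, rfl⟩ := h5v
      have key : (5*a)^2 + (5*b)^2 = 25*(a^2+b^2) := by ring
      by_cases hab : (5:ℤ) ∣ a^2 + b^2
      · have habpos : 0 < a^2 + b^2 := by nlinarith
        have hlt : (a^2+b^2).toNat < n := by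
          have : ((a^2+b^2).toNat : ℤ) = a^2+b^2 := by omega
          omega
        obtain ⟨x, y, hxy, hnd⟩ := IH _ hlt a b (by omega) hab habpos
        have h5x : ¬ (5:ℤ) ∣ x := fun h => hnd (Dvd.dvd.mul_right h y)
        obtain ⟨X, Y, hXY, hXYnd⟩ := brah x y (Or.inl h5x)
        exact ⟨X, Y, by rw [key, hxy]; linarith, hXYnd⟩
      · have hor : ¬ (5:ℤ) ∣ a ∨ ¬ (5:ℤ) ∣ b := by
          by_contra hc
          push_neg at hc
          obtain ⟨⟨a', rfl⟩, ⟨b', rfl⟩⟩ := hc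
          exact hab ⟨5*(a'^2+b'^2), by ring⟩
        obtain ⟨X, Y, hXY, hXYnd⟩ := brah a b hor
        exact ⟨X, Y, by rw [key]; linarith, hXYnd⟩
    · have h5v : ¬ (5:ℤ) ∣ v := by
        intro hv
        apply h5u
        have h2 : (5:ℤ) ∣ v^2 := Dvd.dvd.pow hv (by norm_num)
        have h1 : (5:ℤ) ∣ u^2 := by omega
        exact prime5.dvd_of_dvd_pow h1
      refine ⟨u, v, rfl, fun hd => ?_⟩
      rcases (prime5.dvd_mul).mp hd with h | h
      exacts [h5u h, h5v h]
end

section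
/- For every nonnegative integer n and every r ∈ {6, 14}, there exist integers x, y, z with z odd such that 20n + r = 5x² + 5y² + z². -/
/-!
An integer `N ≡ 2 (mod 4)` is a sum of three squares (Ankeny): write `N = d² · 2m` with `2m`
squarefree and take, by Dirichlet, a prime `p ≡ 1 (mod 4)` with `2m ∣ p + 1` and `2m` a square
mod `p`. A pigeonhole argument gives `2m W² = Z² + p Y²` with `W ≠ 0`, and `p = a² + b²` turns
this into a representation of `N W²`, from which the Davenport–Cassels descent removes `W²`.

Exactly one of the three squares is even. After rotating the two odd ones by `(2 ± i)²` until they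
are not both divisible by `5`, the condition `N ≡ ±1 (mod 5)` forces the even square and one of the
odd ones to sum to a multiple of `5`, and such a sum of two squares is `5 (x² + y²)`.
-/

def IsSumThreeSq (N : ℤ) : Prop := ∃ x y z : ℤ, x ^ 2 + y ^ 2 + z ^ 2 = N

theorem four_mul_bmod_sq_le (x : ℤ) {g : ℕ} (hg : 0 < g) : 4 * x.bmod g ^ 2 ≤ (g : ℤ) ^ 2 := by
  have h₁ := Int.le_bmod (x := x) hg
  have h₂ := Int.bmod_le (x := x) hg
  have h₃ : (2 : ℤ) * ((g : ℤ) / 2) ≤ g := Int.mul_ediv_self_le (by norm_num)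
  have h₄ : (2 : ℤ) * (((g : ℤ) - 1) / 2) ≤ g - 1 := Int.mul_ediv_self_le (by norm_num)
  nlinarith

/-- Davenport–Cassels: the line through the rational point `(A, B, C) / g` of the sphere
`x² + y² + z² = N` and the nearest integer point meets the sphere again at a rational point whose
denominator is smaller than `g`. -/
theorem IsSumThreeSq.exists_lt_of_mul_sq {N : ℤ} {g : ℕ} (hg : 1 < g)
    (hN : IsSumThreeSq (N * g ^ 2)) : ∃ h : ℕ, 0 < h ∧ h < g ∧ IsSumThreeSq (N * h ^ 2) := by
  obtain ⟨A, B, C, hABC⟩ := hN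
  have hg₀ : 0 < g := by omega
  obtain ⟨a, α, hA, hα⟩ : ∃ a α : ℤ, A = a * g + α ∧ 4 * α ^ 2 ≤ (g : ℤ) ^ 2 :=
    ⟨_, _, (Int.bdiv_add_bmod' A g).symm, four_mul_bmod_sq_le A hg₀⟩
  obtain ⟨b, β, hB, hβ⟩ : ∃ b β : ℤ, B = b * g + β ∧ 4 * β ^ 2 ≤ (g : ℤ) ^ 2 :=
    ⟨_, _, (Int.bdiv_add_bmod' B g).symm, four_mul_bmod_sq_le B hg₀⟩
  obtain ⟨c, γ, hC, hγ⟩ : ∃ c γ : ℤ, C = c * g + γ ∧ 4 * γ ^ 2 ≤ (g : ℤ) ^ 2 :=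
    ⟨_, _, (Int.bdiv_add_bmod' C g).symm, four_mul_bmod_sq_le C hg₀⟩
  set q := a ^ 2 + b ^ 2 + c ^ 2
  set s := a * A + b * B + c * C
  set h := N * g - 2 * s + q * g
  have hgZ : (0 : ℤ) < g := by exact_mod_cast hg₀
  have hrem : α ^ 2 + β ^ 2 + γ ^ 2 = g * h := by
    subst hA hB hC; linear_combination hABC
  have hh₀ : 0 ≤ h := by nlinarith [sq_nonneg α, sq_nonneg β, sq_nonneg γ]
  have hhg : h < g := by nlinarith [sq_nonneg α, sq_nonneg β, sq_nonneg γ]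
  rcases hh₀.eq_or_lt with hh₀ | hh₀
  · have hα₀ : α = 0 := by nlinarith [sq_nonneg α, sq_nonneg β, sq_nonneg γ]
    have hβ₀ : β = 0 := by nlinarith [sq_nonneg α, sq_nonneg β, sq_nonneg γ]
    have hγ₀ : γ = 0 := by nlinarith [sq_nonneg α, sq_nonneg β, sq_nonneg γ]
    subst hA hB hC hα₀ hβ₀ hγ₀
    refine ⟨1, one_pos, hg, a, b, c, mul_right_cancel₀ (pow_ne_zero 2 hgZ.ne') ?_⟩
    linear_combination hABC
  · lift h to ℕ using hh₀.le with k hk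
    refine ⟨k, by exact_mod_cast hh₀, by exact_mod_cast hhg, (q - N) * A + 2 * (N * g - s) * a,
      (q - N) * B + 2 * (N * g - s) * b, (q - N) * C + 2 * (N * g - s) * c, ?_⟩
    rw [hk]
    linear_combination (q - N) ^ 2 * hABC

theorem IsSumThreeSq.of_mul_sq {N : ℤ} {g : ℕ} (hg : 0 < g) (hN : IsSumThreeSq (N * g ^ 2)) :
    IsSumThreeSq N := by
  induction g using Nat.strong_induction_on with
  | _ g ih =>
    rcases (Nat.one_le_iff_ne_zero.mpr hg.ne').eq_or_lt with rfl | hg₁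
    · simpa using hN
    · obtain ⟨h, hh₀, hhg, hh⟩ := hN.exists_lt_of_mul_sq hg₁
      exact ih h hhg hh₀ hh

theorem not_isSquare_of_squarefree {n : ℕ} (hn : Squarefree n) (hn₁ : 1 < n) : ¬IsSquare n := by
  rintro ⟨k, rfl⟩
  rw [Nat.isUnit_iff.mp (hn k dvd_rfl)] at hn₁
  omega

theorem sq_lt_of_abs_le_sqrt {n : ℕ} (hn : ¬IsSquare n) {x : ℤ} (hx : |x| ≤ n.sqrt) :
    x ^ 2 < n := by
  rw [Int.abs_eq_natAbs, Nat.cast_le, Nat.le_sqrt] at hx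
  have hne : x.natAbs * x.natAbs ≠ n := fun h => hn ⟨_, h.symm⟩
  rw [← Int.natAbs_pow_two, sq]
  exact_mod_cast lt_of_le_of_ne hx hne

theorem mul_lt_sqrt_succ_mul_sqrt_succ_mul_sqrt_succ (a b : ℕ) :
    a * b < (a.sqrt + 1) * (b.sqrt + 1) * ((a * b).sqrt + 1) := by
  rw [← Nat.mul_self_lt_mul_self_iff]
  have key : a * b * (a * b) < (a.sqrt + 1) * (a.sqrt + 1) * ((b.sqrt + 1) * (b.sqrt + 1))
      * (((a * b).sqrt + 1) * ((a * b).sqrt + 1)) :=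
    mul_lt_mul'' (mul_lt_mul'' a.lt_succ_sqrt b.lt_succ_sqrt (Nat.zero_le _) (Nat.zero_le _))
      (a * b).lt_succ_sqrt (Nat.zero_le _) (Nat.zero_le _)
  calc a * b * (a * b) < _ := key
    _ = _ := by ring

theorem exists_small_solution_of_dvd_sub (n p : ℕ) (γ : ℤ) (B₁ B₂ B₃ : ℕ) [NeZero n] [NeZero p]
    (hB : n * p < (B₁ + 1) * (B₂ + 1) * (B₃ + 1)) :
    ∃ W Y Z : ℤ, ¬(W = 0 ∧ Y = 0 ∧ Z = 0) ∧ |W| ≤ B₁ ∧ |Y| ≤ B₂ ∧ |Z| ≤ B₃ ∧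
      (n : ℤ) ∣ Z - Y ∧ (p : ℤ) ∣ Z - γ * W := by
  let box : Finset (ℤ × ℤ × ℤ) :=
    Finset.Icc 0 (B₁ : ℤ) ×ˢ Finset.Icc 0 (B₂ : ℤ) ×ˢ Finset.Icc 0 (B₃ : ℤ)
  let f : ℤ × ℤ × ℤ → ZMod n × ZMod p := fun t => ((t.2.2 - t.2.1 : ℤ), (t.2.2 - γ * t.1 : ℤ))
  have hcard : (Finset.univ : Finset (ZMod n × ZMod p)).card < box.card := by
    simpa [box, Finset.card_product, ZMod.card, mul_assoc] using hB
  obtain ⟨u, hu, v, hv, huv, hf⟩ :=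
    Finset.exists_ne_map_eq_of_card_lt_of_maps_to hcard (fun t _ => Finset.mem_univ (f t))
  simp only [box, Finset.mem_product, Finset.mem_Icc] at hu hv
  simp only [f, Prod.mk.injEq, ZMod.intCast_eq_intCast_iff_dvd_sub] at hf
  refine ⟨v.1 - u.1, v.2.1 - u.2.1, v.2.2 - u.2.2, fun h => huv ?_, ?_, ?_, ?_, ?_, ?_⟩
  · ext <;> omega
  · exact abs_le.mpr ⟨by omega, by omega⟩
  · exact abs_le.mpr ⟨by omega, by omega⟩
  · exact abs_le.mpr ⟨by omega, by omega⟩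
  · convert hf.1 using 1; ring
  · convert hf.2 using 1; ring

theorem eq_zero_or_eq_neg_of_dvd {M F : ℤ} (hM : 0 < M) (hd : M ∣ F) (h₁ : -(2 * M) < F)
    (h₂ : F < M) : F = 0 ∨ F = -M := by
  obtain ⟨k, rfl⟩ := hd
  have : -2 < k := by nlinarith
  have : k < 1 := by nlinarith
  interval_cases k <;> simp

theorem mul_dvd_mul_sq_sub_sq_sub_mul_sq {n p : ℕ} {γ W Y Z : ℤ} (hnp : n.Coprime p)
    (hdvd : n ∣ p + 1) (hγ : (p : ℤ) ∣ γ ^ 2 - n) (hZY : (n : ℤ) ∣ Z - Y)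
    (hZW : (p : ℤ) ∣ Z - γ * W) : (n * p : ℤ) ∣ n * W ^ 2 - Z ^ 2 - p * Y ^ 2 := by
  have hn : (n : ℤ) ∣ n * W ^ 2 - Z ^ 2 - p * Y ^ 2 := by
    have hp₁ : (n : ℤ) ∣ p + 1 := by exact_mod_cast hdvd
    have : n * W ^ 2 - Z ^ 2 - p * Y ^ 2 = n * W ^ 2 - (Z - Y) * (Z + Y) - (p + 1) * Y ^ 2 := by
      ring
    rw [this]
    exact ((dvd_mul_right _ _).sub (hZY.mul_right _)).sub (hp₁.mul_right _)
  have hp : (p : ℤ) ∣ n * W ^ 2 - Z ^ 2 - p * Y ^ 2 := by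
    have : n * W ^ 2 - Z ^ 2 - p * Y ^ 2
        = -((γ ^ 2 - n) * W ^ 2) - (Z - γ * W) * (Z + γ * W) - p * Y ^ 2 := by ring
    rw [this]
    exact ((hγ.mul_right _).neg_right.sub (hZW.mul_right _)).sub (dvd_mul_right _ _)
  exact (Nat.isCoprime_iff_coprime.mpr hnp).mul_dvd hn hp

theorem exists_mul_sq_eq_sq_add_mul_sq {n p : ℕ} (hn : Squarefree n) (hn₁ : 1 < n)
    (hp : p.Prime) (hnp : n.Coprime p) (hdvd : n ∣ p + 1) (hsq : IsSquare (n : ZMod p)) :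
    ∃ W Y Z : ℤ, W ≠ 0 ∧ n * W ^ 2 = Z ^ 2 + p * Y ^ 2 := by
  have : NeZero n := ⟨by omega⟩
  have : NeZero p := ⟨hp.ne_zero⟩
  obtain ⟨r, hr⟩ := hsq
  have hγ : (p : ℤ) ∣ (r.val : ℤ) ^ 2 - n := by
    rw [← ZMod.intCast_zmod_eq_zero_iff_dvd]
    push_cast
    rw [ZMod.natCast_zmod_val, hr]
    ring
  obtain ⟨W, Y, Z, hWYZ, hW, hY, hZ, hZY, hZW⟩ :=
    exists_small_solution_of_dvd_sub n p r.val p.sqrt n.sqrt (n * p).sqrt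
      ((mul_lt_sqrt_succ_mul_sqrt_succ_mul_sqrt_succ n p).trans_eq (by ring))
  have hnp₁ : 1 < n * p := by nlinarith [hp.one_lt]
  have hW' : W ^ 2 < p :=
    sq_lt_of_abs_le_sqrt (not_isSquare_of_squarefree hp.squarefree hp.one_lt) hW
  have hY' : Y ^ 2 < n := sq_lt_of_abs_le_sqrt (not_isSquare_of_squarefree hn hn₁) hY
  have hZ' : Z ^ 2 < (n * p : ℕ) := sq_lt_of_abs_le_sqrt
    (not_isSquare_of_squarefree ((Nat.squarefree_mul hnp).mpr ⟨hn, hp.squarefree⟩) hnp₁) hZ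
  push_cast at hZ'
  have hF := mul_dvd_mul_sq_sub_sq_sub_mul_sq hnp hdvd hγ hZY hZW
  have hp₀ : (0 : ℤ) < p := by exact_mod_cast hp.pos
  have hnpZ : (0 : ℤ) < n * p := mul_pos (by exact_mod_cast (by omega : 0 < n)) hp₀
  rcases eq_zero_or_eq_neg_of_dvd hnpZ hF (by nlinarith [sq_nonneg W])
    (by nlinarith [sq_nonneg Y, sq_nonneg Z]) with hF | hF
  · refine ⟨W, Y, Z, fun hW₀ => hWYZ ⟨hW₀, ?_⟩, by linear_combination hF⟩
    subst hW₀
    constructor <;> nlinarith [sq_nonneg Y, sq_nonneg Z]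
  · -- `n (W² + p) = Z² + p Y²`; multiplying by `W² + p` makes the left side `n` times a square.
    refine ⟨W ^ 2 + p, Z + Y * W, Z * W - p * Y,
      (add_pos_of_nonneg_of_pos (sq_nonneg W) hp₀).ne', ?_⟩
    linear_combination (W ^ 2 + p) * hF

theorem exists_prime_modEq_two_mul_sub_one {m : ℕ} (hm : Odd m) (B : ℕ) :
    ∃ p > B, p.Prime ∧ p ≡ 2 * m - 1 [MOD 8 * m] := by
  have hm₀ : 0 < m := hm.pos
  have hcop₂ : (2 * m - 1).Coprime 2 := Nat.coprime_two_right.mpr (Nat.odd_iff.mpr (by omega))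
  have hcop : (2 * m - 1).Coprime (2 * m) := by
    have h := (Nat.coprime_self_add_right (m := 2 * m - 1) (n := 1)).mpr (Nat.coprime_one_right _)
    rwa [Nat.sub_add_cancel (by omega)] at h
  refine Nat.forall_exists_prime_gt_and_modEq B (by omega) (Nat.Coprime.mul_right ?_ ?_)
  · exact Nat.Coprime.pow_right 3 hcop₂
  · exact hcop.coprime_dvd_right (dvd_mul_left m 2)

-- `J(2m | p) = χ₈ p · J(p | m) = χ₈ p · χ₄ m` by reciprocity, and `p ≡ 2m - 1 (mod 8)` makes the
-- two characters agree.
theorem jacobiSym_two_mul_eq_one {p m : ℕ} (hm : Odd m) (hp : p % 8 = (2 * m - 1) % 8)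
    (hmp : m ∣ p + 1) : jacobiSym (2 * m : ℕ) p = 1 := by
  have hm₂ := Nat.odd_iff.mp hm
  have hp₄ : p % 4 = 1 := by omega
  have hp_odd : Odd p := Nat.odd_iff.mpr (by omega)
  have hpm : (p : ℤ) % m = -1 % m := Int.ModEq.symm <| Int.modEq_iff_dvd.mpr <| by
    have : ((m : ℕ) : ℤ) ∣ ((p + 1 : ℕ) : ℤ) := Int.natCast_dvd_natCast.mpr hmp
    push_cast at this
    simpa using this
  rw [Nat.cast_mul, Nat.cast_ofNat, jacobiSym.mul_left, jacobiSym.at_two hp_odd,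
    ← jacobiSym.quadratic_reciprocity_one_mod_four hp₄ hm, jacobiSym.mod_left' hpm,
    jacobiSym.at_neg_one hm, ZMod.χ₈_nat_eq_if_mod_eight, ZMod.χ₄_nat_eq_if_mod_four]
  split_ifs <;> omega

theorem exists_prime_isSquare_two_mul {m : ℕ} (hm : Odd m) :
    ∃ p, p.Prime ∧ 2 * m < p ∧ p % 4 = 1 ∧ 2 * m ∣ p + 1 ∧ IsSquare ((2 * m : ℕ) : ZMod p) := by
  obtain ⟨p, hpm, hp, hmod⟩ := exists_prime_modEq_two_mul_sub_one hm (2 * m)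
  have hm₂ := Nat.odd_iff.mp hm
  have hp₈ : p % 8 = (2 * m - 1) % 8 := hmod.of_mul_right m
  have hmp : m ∣ p + 1 := by
    rw [← Nat.modEq_zero_iff_dvd]
    refine ((hmod.of_mul_left 8).add_right 1).trans ?_
    rw [Nat.sub_add_cancel (by omega), Nat.modEq_zero_iff_dvd]
    exact dvd_mul_left m 2
  have := Fact.mk hp
  refine ⟨p, hp, hpm, by omega,
    (Nat.coprime_two_left.mpr hm).mul_dvd_of_dvd_of_dvd (by omega) hmp, ?_⟩
  have h := ZMod.isSquare_of_jacobiSym_eq_one (jacobiSym_two_mul_eq_one hm hp₈ hmp)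
  rwa [Int.cast_natCast] at h

theorem isSumThreeSq_of_emod_four_eq_two {N : ℕ} (hN : N % 4 = 2) : IsSumThreeSq N := by
  obtain ⟨k, d, rfl, hk⟩ := Nat.sq_mul_squarefree N
  have hk₄ : k % 4 = 2 := by
    rcases Nat.even_or_odd' d with ⟨j, rfl | rfl⟩ <;> ring_nf at hN <;> omega
  obtain ⟨m, rfl, hm⟩ : ∃ m, k = 2 * m ∧ Odd m := ⟨k / 2, by omega, Nat.odd_iff.mpr (by omega)⟩
  obtain ⟨p, hp, hmp, hp₄, hdvd, hsq⟩ := exists_prime_isSquare_two_mul hm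
  have hcop : (2 * m).Coprime p := ((hp.coprime_iff_not_dvd).mpr fun h =>
    absurd (Nat.le_of_dvd (by omega) h) (by omega)).symm
  obtain ⟨W, Y, Z, hW, hrep⟩ := exists_mul_sq_eq_sq_add_mul_sq hk (by omega) hp hcop hdvd hsq
  have := Fact.mk hp
  obtain ⟨a, b, hab⟩ := Nat.Prime.sq_add_sq (p := p) (by omega)
  refine IsSumThreeSq.of_mul_sq (g := W.natAbs) (Int.natAbs_pos.mpr hW)
    ⟨d * Z, d * a * Y, d * b * Y, ?_⟩
  have hab' : (a : ℤ) ^ 2 + b ^ 2 = p := by exact_mod_cast hab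
  push_cast at hrep ⊢
  rw [sq_abs]
  linear_combination (d : ℤ) ^ 2 * hrep.symm + ((d : ℤ) ^ 2 * Y ^ 2) * hab'

theorem sq_emod_four (x : ℤ) : x ^ 2 % 4 = x % 2 := by
  rcases Int.even_or_odd' x with ⟨k, rfl | rfl⟩ <;> ring_nf <;> omega

theorem IsSumThreeSq.exists_odd_odd {N : ℤ} (h : IsSumThreeSq N) (hN : N % 4 = 2) :
    ∃ E O₁ O₂ : ℤ, Odd O₁ ∧ Odd O₂ ∧ E ^ 2 + O₁ ^ 2 + O₂ ^ 2 = N := by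
  obtain ⟨A, B, C, rfl⟩ := h
  have := sq_emod_four A; have := sq_emod_four B; have := sq_emod_four C
  simp only [Int.odd_iff]
  have : A % 2 = 0 ∨ B % 2 = 0 ∨ C % 2 = 0 := by omega
  rcases this with h | h | h
  · exact ⟨A, B, C, by omega, by omega, rfl⟩
  · exact ⟨B, A, C, by omega, by omega, by ring⟩
  · exact ⟨C, A, B, by omega, by omega, by ring⟩

theorem odd_and_odd_of_sq_add_sq_eq {P Q O₁ O₂ : ℤ} (h₁ : Odd O₁) (h₂ : Odd O₂)
    (h : P ^ 2 + Q ^ 2 = O₁ ^ 2 + O₂ ^ 2) : Odd P ∧ Odd Q := by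
  have := sq_emod_four P; have := sq_emod_four Q
  have := sq_emod_four O₁; have := sq_emod_four O₂
  simp only [Int.odd_iff] at h₁ h₂ ⊢
  omega

theorem exists_sq_add_sq_eq_not_five_dvd (a b : ℤ) (hab : ¬(a = 0 ∧ b = 0)) :
    ∃ P Q : ℤ, P ^ 2 + Q ^ 2 = a ^ 2 + b ^ 2 ∧ ¬(5 ∣ P ∧ 5 ∣ Q) := by
  by_cases h5 : 5 ∣ a ∧ 5 ∣ b
  · obtain ⟨⟨a, rfl⟩, ⟨b, rfl⟩⟩ := h5
    obtain ⟨P, Q, hPQ, hPQ₅⟩ := exists_sq_add_sq_eq_not_five_dvd a b (by omega)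
    -- multiply `P + Qi` by `(2 + i)²` or by `(2 - i)²`; one of the two products is prime to `5`
    by_cases h : 5 ∣ 3 * P + 4 * Q
    · exact ⟨3 * P - 4 * Q, 4 * P + 3 * Q, by linear_combination 25 * hPQ, by omega⟩
    · exact ⟨3 * P + 4 * Q, 4 * P - 3 * Q, by linear_combination 25 * hPQ, by omega⟩
  · exact ⟨a, b, rfl, h5⟩
termination_by a.natAbs + b.natAbs
decreasing_by omega

theorem ZMod.eq_two_mul_or_eq_neg_two_mul_of_sq_add_sq_eq_zero :
    ∀ u v : ZMod 5, u ^ 2 + v ^ 2 = 0 → v = 2 * u ∨ v = -(2 * u) := by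
  decide

theorem five_dvd_iff_intCast_zmod_eq_zero (a : ℤ) : 5 ∣ a ↔ (a : ZMod 5) = 0 := by
  exact_mod_cast (ZMod.intCast_zmod_eq_zero_iff_dvd a 5).symm

theorem exists_five_mul_sq_add_five_mul_sq_eq {u v : ℤ} (h : 5 ∣ u ^ 2 + v ^ 2) :
    ∃ x y : ℤ, 5 * x ^ 2 + 5 * y ^ 2 = u ^ 2 + v ^ 2 := by
  have h₀ : (u : ZMod 5) ^ 2 + (v : ZMod 5) ^ 2 = 0 := by
    exact_mod_cast (five_dvd_iff_intCast_zmod_eq_zero _).mp h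
  rcases ZMod.eq_two_mul_or_eq_neg_two_mul_of_sq_add_sq_eq_zero _ _ h₀ with hv | hv
  · obtain ⟨k, hk⟩ := (five_dvd_iff_intCast_zmod_eq_zero (v - 2 * u)).mpr
      (by push_cast; rw [hv]; ring)
    exact ⟨u + 2 * k, -k, by rw [show v = 2 * u + 5 * k by omega]; ring⟩
  · obtain ⟨k, hk⟩ := (five_dvd_iff_intCast_zmod_eq_zero (v + 2 * u)).mpr
      (by push_cast; rw [hv]; ring)
    exact ⟨u - 2 * k, k, by rw [show v = -(2 * u) + 5 * k by omega]; ring⟩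

theorem ZMod.sq_add_sq_eq_zero_of_sum_three_sq : ∀ e o₁ o₂ : ZMod 5,
    (e ^ 2 + o₁ ^ 2 + o₂ ^ 2 = 1 ∨ e ^ 2 + o₁ ^ 2 + o₂ ^ 2 = 4) → ¬(o₁ = 0 ∧ o₂ = 0) →
      e ^ 2 + o₂ ^ 2 = 0 ∨ e ^ 2 + o₁ ^ 2 = 0 := by
  decide

theorem exists_five_mul_sq_add_five_mul_sq_add_odd_sq {N E O₁ O₂ : ℤ}
    (hN : N % 5 = 1 ∨ N % 5 = 4) (h₁ : Odd O₁) (h₂ : Odd O₂) (h : E ^ 2 + O₁ ^ 2 + O₂ ^ 2 = N) :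
    ∃ x y z : ℤ, Odd z ∧ N = 5 * x ^ 2 + 5 * y ^ 2 + z ^ 2 := by
  obtain ⟨P, Q, hPQ, hPQ₅⟩ :=
    exists_sq_add_sq_eq_not_five_dvd O₁ O₂ (fun h₀ => by simp [h₀.1] at h₁)
  obtain ⟨hP, hQ⟩ := odd_and_odd_of_sq_add_sq_eq h₁ h₂ hPQ
  have hmod : (E : ZMod 5) ^ 2 + (P : ZMod 5) ^ 2 + (Q : ZMod 5) ^ 2 = 1 ∨
      (E : ZMod 5) ^ 2 + (P : ZMod 5) ^ 2 + (Q : ZMod 5) ^ 2 = 4 := by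
    have key : ((N % 5 : ℤ) : ZMod 5) = ((E ^ 2 + P ^ 2 + Q ^ 2 : ℤ) : ZMod 5) := by
      have hcast : ((N % 5 : ℤ) : ZMod 5) = N := by exact_mod_cast ZMod.intCast_mod N 5
      rw [hcast, ← h]
      congr 1
      linarith
    push_cast at key
    rcases hN with hN | hN <;> rw [hN] at key
    · exact Or.inl key.symm
    · exact Or.inr key.symm
  simp only [five_dvd_iff_intCast_zmod_eq_zero] at hPQ₅
  rcases ZMod.sq_add_sq_eq_zero_of_sum_three_sq _ _ _ hmod hPQ₅ with h₀ | h₀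
  · obtain ⟨x, y, hxy⟩ := exists_five_mul_sq_add_five_mul_sq_eq
      ((five_dvd_iff_intCast_zmod_eq_zero _).mpr (by push_cast; exact h₀))
    exact ⟨x, y, P, hP, by linarith⟩
  · obtain ⟨x, y, hxy⟩ := exists_five_mul_sq_add_five_mul_sq_eq
      ((five_dvd_iff_intCast_zmod_eq_zero _).mpr (by push_cast; exact h₀))
    exact ⟨x, y, Q, hQ, by linarith⟩

theorem stmt_12 (n : ℕ) (r : ℤ) (hr : r = 6 ∨ r = 14) :
    ∃ x y z : ℤ, Odd z ∧ 20*(n : ℤ) + r = 5*x^2 + 5*y^2 + z^2 := by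
  obtain ⟨N, hN⟩ : ∃ N : ℕ, (N : ℤ) = 20 * n + r :=
    ⟨(20 * n + r).toNat, Int.toNat_of_nonneg (by omega)⟩
  obtain ⟨E, O₁, O₂, h₁, h₂, h⟩ :=
    (isSumThreeSq_of_emod_four_eq_two (N := N) (by omega)).exists_odd_odd (by omega)
  rw [← hN]
  exact exists_five_mul_sq_add_five_mul_sq_add_odd_sq (by omega) h₁ h₂ h
end

section
/- A nonnegative integer w can be written as 3x² + 6y² with x, y integers if and only if 3 divides w and w = u² + 2v² for some integers u, v. -/
theorem stmt_14 (w : ℕ) :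
    (∃ x y : ℤ, (w : ℤ) = 3*x^2 + 6*y^2) ↔
    (3 ∣ (w : ℤ) ∧ ∃ u v : ℤ, (w : ℤ) = u^2 + 2*v^2) := by
  constructor
  · rintro ⟨x, y, h⟩
    exact ⟨⟨x^2 + 2*y^2, by linarith⟩, x + 2*y, x - y, by linarith⟩
  · rintro ⟨hd, u, v, h⟩
    have h3 : (3 : ℤ) ∣ (u - v) * (u + v) := by
      have hdv : (3 : ℤ) ∣ u^2 - v^2 := by
        obtain ⟨c, hc⟩ := hd
        exact ⟨c - v^2, by linarith⟩
      rw [show (u - v) * (u + v) = u^2 - v^2 by ring]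
      exact hdv
    have hp : Prime (3 : ℤ) := Int.prime_three
    rcases hp.dvd_mul.mp h3 with ⟨k, hk⟩ | ⟨k, hk⟩
    · refine ⟨v + k, k, ?_⟩
      have hu : u = 3*k + v := by linarith
      rw [h, hu]; ring
    · refine ⟨k - v, k, ?_⟩
      have hu : u = 3*k - v := by linarith
      rw [h, hu]; ring
end
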